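/- arXiv:2204.05250 — 8 statements merged into one kernel-verified Lean document; each statement's English description precedes it below -/
import Mathlib

section
/- Let G be a connected graph on n ≥ 4 vertices, not equal to the path P4, such that either G minus its leaves is identifiable or G is triangle-free. Then G admits a total dominating identifying code of size at most n − s(G), where s(G) is the number of support vertices. -/
/-!
Delete one leaf at every support vertex and keep the rest as the code `C`, so `|C| = n - s(G)`.
A vertex all of whose neighbours were deleted would be a leaf hanging on a leaf, which only
happens in `K₂`; so `C` is totally dominating. A deleted leaf sees exactly its support vertex in
`C`, which separates it from everything else. Two kept vertices `u ≠ w` with the same trace are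
adjacent. If `u` is a leaf, `G` has at most three vertices. Otherwise, if the non-leaves induce an
identifiable graph, `u` and `w` are separated by their non-leaf neighbours, all of which are kept;
and if `G` is triangle-free, every neighbour of `u` other than `w` is a deleted leaf, and
symmetrically for `w`, which makes `G` a `P₄`.
-/

open SimpleGraph

/-- The closed neighbourhood of a vertex. -/
def closedNbr {V : Type*} (G : SimpleGraph V) (v : V) : Set V := insert v (G.neighborSet v)

/-- `C` is an identifying code of `G`. -/
def IsIdCode {V : Type*} (G : SimpleGraph V) (C : Set V) : Prop :=
  (∀ v : V, (closedNbr G v ∩ C).Nonempty) ∧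
  ∀ u v : V, closedNbr G u ∩ C = closedNbr G v ∩ C → u = v

/-- A vertex of degree 1. -/
def IsLeaf {V : Type*} (G : SimpleGraph V) (v : V) : Prop := (G.neighborSet v).ncard = 1

/-- The set of leaves of `G`. -/
def leaves {V : Type*} (G : SimpleGraph V) : Set V := {v | IsLeaf G v}

/-- The set of support vertices of `G`. -/
def supports {V : Type*} (G : SimpleGraph V) : Set V := {v | ∃ u, IsLeaf G u ∧ G.Adj v u}

/-- `G` is identifiable: distinct vertices have distinct closed neighbourhoods. -/
def Identifiable {V : Type*} (G : SimpleGraph V) : Prop :=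
  ∀ u v : V, closedNbr G u = closedNbr G v → u = v

/-- `G` is twin-free: no two distinct vertices share an open or closed neighbourhood. -/
def TwinFree {V : Type*} (G : SimpleGraph V) : Prop :=
  ∀ u v : V, u ≠ v →
    G.neighborSet u ≠ G.neighborSet v ∧ closedNbr G u ≠ closedNbr G v

/-- A total dominating identifying code. -/
def IsTotalIdCode {V : Type*} (G : SimpleGraph V) (C : Set V) : Prop :=
  (∀ v : V, (G.neighborSet v ∩ C).Nonempty) ∧
  ∀ u v : V, closedNbr G u ∩ C = closedNbr G v ∩ C → u = v

section

variable {V : Type*} {G : SimpleGraph V}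

lemma mem_closedNbr_of_inter_eq {C : Set V} {u w x : V}
    (heq : closedNbr G u ∩ C = closedNbr G w ∩ C) (hx : x ∈ closedNbr G w) (hxC : x ∈ C) :
    x ∈ closedNbr G u :=
  ((Set.ext_iff.1 heq x).2 ⟨hx, hxC⟩).1

lemma IsLeaf.neighborSet_eq {l v : V} (hl : IsLeaf G l) (h : G.Adj l v) :
    G.neighborSet l = {v} := by
  obtain ⟨a, ha⟩ := Set.ncard_eq_one.mp hl
  have hva : v ∈ ({a} : Set V) := ha ▸ h
  rw [ha, Set.mem_singleton_iff.1 hva]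

lemma IsLeaf.eq_of_adj {l v w : V} (hl : IsLeaf G l) (hv : G.Adj l v) (hw : G.Adj l w) :
    w = v := by
  have hw' : w ∈ G.neighborSet l := hw
  rwa [hl.neighborSet_eq hv] at hw'

lemma isLeaf_of_neighborSet_eq {v w : V} (h : G.neighborSet v = {w}) : IsLeaf G v := by
  rw [IsLeaf, h, Set.ncard_singleton]

lemma SimpleGraph.Connected.mem_of_adj_closed (hG : G.Connected) {S : Set V}
    (hS : ∀ a ∈ S, ∀ b, G.Adj a b → b ∈ S) {s : V} (hs : s ∈ S) (x : V) : x ∈ S := by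
  induction (reachable_iff_reflTransGen s x).1 (hG s x) with
  | refl => exact hs
  | tail _ hab ih => exact hS _ ih _ hab

lemma SimpleGraph.Connected.card_le_of_adj_closed [Fintype V] (hG : G.Connected) {S : Finset V}
    (hS : ∀ a ∈ S, ∀ b, G.Adj a b → b ∈ S) {s : V} (hs : s ∈ S) : Fintype.card V ≤ S.card := by
  rw [← Finset.card_univ]
  exact Finset.card_le_card fun x _ => hG.mem_of_adj_closed (S := ↑S) hS hs x

lemma SimpleGraph.Connected.exists_adj [Nontrivial V] (hG : G.Connected) (v : V) :
    ∃ w, G.Adj v w :=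
  G.mem_support.1 (hG.preconnected.support_eq_univ ▸ Set.mem_univ v)

lemma not_adj_of_isLeaf [Fintype V] (hG : G.Connected) (hn : 3 ≤ Fintype.card V) {u v : V}
    (hu : IsLeaf G u) (hv : IsLeaf G v) : ¬ G.Adj u v := by
  classical
  intro huv
  have hcard := hG.card_le_of_adj_closed (S := {u, v}) ?_ (Finset.mem_insert_self u _)
  · have := Finset.card_le_two (a := u) (b := v)
    omega
  · simp only [Finset.mem_insert, Finset.mem_singleton]
    rintro a (rfl | rfl) b hab
    · exact Or.inr (hu.eq_of_adj huv hab)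
    · exact Or.inl (hv.eq_of_adj huv.symm hab)

lemma not_isLeaf_of_mem_supports [Fintype V] (hG : G.Connected) (hn : 3 ≤ Fintype.card V)
    {v : V} (hv : v ∈ supports G) : ¬ IsLeaf G v :=
  fun hvl => hv.elim fun _ ⟨hu, hvu⟩ => not_adj_of_isLeaf hG hn hvl hu hvu

lemma SimpleGraph.Connected.nonempty_iso_pathGraph_four (hG : G.Connected) {a b c d : V}
    (hac : a ≠ c) (had : a ≠ d) (hbd : b ≠ d)
    (ha : G.neighborSet a = {b}) (hb : G.neighborSet b = {a, c})
    (hc : G.neighborSet c = {b, d}) (hd : G.neighborSet d = {c}) :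
    Nonempty (G ≃g pathGraph 4) := by
  have hab : a ≠ b := G.ne_of_adj (show b ∈ G.neighborSet a by rw [ha]; rfl)
  have hbc : b ≠ c := G.ne_of_adj (show c ∈ G.neighborSet b by rw [hb]; simp)
  have hcd : c ≠ d := G.ne_of_adj (show d ∈ G.neighborSet c by rw [hc]; simp)
  have hcover : ∀ x, x ∈ ({a, b, c, d} : Set V) := by
    refine hG.mem_of_adj_closed ?_ (Set.mem_insert a _)
    intro x hx y hxy
    replace hxy : y ∈ G.neighborSet x := hxy
    rcases hx with rfl | rfl | rfl | rfl <;>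
      simp only [ha, hb, hc, hd, Set.mem_insert_iff, Set.mem_singleton_iff] at hxy ⊢ <;> tauto
  let v : Fin 4 → V := ![a, b, c, d]
  have hv : Function.Bijective v := by
    refine ⟨fun i j hij => ?_, fun x => ?_⟩
    · fin_cases i <;> fin_cases j <;> simp_all [v, eq_comm]
    · rcases hcover x with rfl | rfl | rfl | rfl
      exacts [⟨0, rfl⟩, ⟨1, rfl⟩, ⟨2, rfl⟩, ⟨3, rfl⟩]
  refine ⟨(Iso.symm ⟨Equiv.ofBijective v hv, fun {i j} => ?_⟩)⟩
  rw [Equiv.ofBijective_apply, Equiv.ofBijective_apply, ← mem_neighborSet]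
  fin_cases i <;> fin_cases j <;>
    simp [v, ha, hb, hc, hd, pathGraph_adj, hab, hac, had, hbc, hbd, hcd, hab.symm, hac.symm,
      had.symm, hbc.symm, hbd.symm, hcd.symm]

lemma eq_of_inter_eq_of_identifiable_induce {S C : Set V} (hSC : S ⊆ C)
    (hS : Identifiable (G.induce S)) {u w : V} (hu : u ∈ S) (hw : w ∈ S)
    (heq : closedNbr G u ∩ C = closedNbr G w ∩ C) : u = w := by
  refine congrArg Subtype.val (hS ⟨u, hu⟩ ⟨w, hw⟩ ?_)
  ext ⟨x, hx⟩
  have hmem : ∀ v : S, (⟨x, hx⟩ : S) ∈ closedNbr (G.induce S) v ↔ x ∈ closedNbr G v ∩ C :=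
    fun v => by simp [closedNbr, Subtype.ext_iff, hSC hx]
  rw [hmem, hmem, heq]

open Classical in
noncomputable def supportLeaf (G : SimpleGraph V) (v : V) : V :=
  if h : v ∈ supports G then h.choose else v

def chosenLeaves (G : SimpleGraph V) : Set V := supportLeaf G '' supports G

lemma supportLeaf_spec {v : V} (hv : v ∈ supports G) :
    IsLeaf G (supportLeaf G v) ∧ G.Adj v (supportLeaf G v) := by
  rw [supportLeaf, dif_pos hv]
  exact hv.choose_spec

lemma neighborSet_supportLeaf {v : V} (hv : v ∈ supports G) :
    G.neighborSet (supportLeaf G v) = {v} :=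
  (supportLeaf_spec hv).1.neighborSet_eq (supportLeaf_spec hv).2.symm

lemma injOn_supportLeaf : Set.InjOn (supportLeaf G) (supports G) := fun p hp q hq hpq =>
  Set.singleton_injective (by rw [← neighborSet_supportLeaf hp, hpq, neighborSet_supportLeaf hq])

lemma ncard_chosenLeaves : (chosenLeaves G).ncard = (supports G).ncard :=
  injOn_supportLeaf.ncard_image

lemma isLeaf_of_mem_chosenLeaves {x : V} (hx : x ∈ chosenLeaves G) : IsLeaf G x := by
  obtain ⟨s, hs, rfl⟩ := hx
  exact (supportLeaf_spec hs).1

lemma eq_supportLeaf_of_adj {v x : V} (hx : x ∈ chosenLeaves G) (h : G.Adj v x) :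
    v ∈ supports G ∧ x = supportLeaf G v := by
  obtain ⟨s, hs, rfl⟩ := hx
  obtain rfl : v = s := (supportLeaf_spec hs).1.eq_of_adj (supportLeaf_spec hs).2.symm h.symm
  exact ⟨hs, rfl⟩

lemma exists_adj_not_mem_chosenLeaves [Fintype V] (hG : G.Connected) (hn : 3 ≤ Fintype.card V)
    (v : V) : ∃ w, G.Adj v w ∧ w ∉ chosenLeaves G := by
  by_contra! hall
  have : Nontrivial V := Fintype.one_lt_card_iff_nontrivial.1 (by omega)
  obtain ⟨w, hvw⟩ := hG.exists_adj v
  obtain ⟨hv, -⟩ := eq_supportLeaf_of_adj (hall w hvw) hvw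
  refine not_isLeaf_of_mem_supports hG hn hv (isLeaf_of_neighborSet_eq (w := supportLeaf G v) ?_)
  exact Set.ext fun x =>
    ⟨fun hx => (eq_supportLeaf_of_adj (hall x hx) hx).2, fun hx => hx ▸ (supportLeaf_spec hv).2⟩

lemma closedNbr_supportLeaf_inter_compl [Fintype V] (hG : G.Connected)
    (hn : 3 ≤ Fintype.card V) {s : V} (hs : s ∈ supports G) :
    closedNbr G (supportLeaf G s) ∩ (chosenLeaves G)ᶜ = {s} := by
  ext x
  rw [closedNbr, neighborSet_supportLeaf hs]
  constructor
  · rintro ⟨rfl | rfl, hx⟩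
    · exact absurd (Set.mem_image_of_mem _ hs) hx
    · rfl
  · rintro rfl
    exact ⟨Or.inr rfl, fun h => not_isLeaf_of_mem_supports hG hn hs (isLeaf_of_mem_chosenLeaves h)⟩

lemma eq_of_inter_eq_of_mem_chosenLeaves [Fintype V] (hG : G.Connected)
    (hn : 3 ≤ Fintype.card V) {u w : V} (hu : u ∈ chosenLeaves G)
    (heq : closedNbr G u ∩ (chosenLeaves G)ᶜ = closedNbr G w ∩ (chosenLeaves G)ᶜ) : u = w := by
  obtain ⟨s, hs, rfl⟩ := hu
  rw [closedNbr_supportLeaf_inter_compl hG hn hs] at heq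
  by_cases hw : w ∈ chosenLeaves G
  · obtain ⟨t, ht, rfl⟩ := hw
    rw [closedNbr_supportLeaf_inter_compl hG hn ht, Set.singleton_eq_singleton_iff] at heq
    rw [heq]
  · obtain ⟨t, hwt, ht⟩ := exists_adj_not_mem_chosenLeaves hG hn w
    have hws : w ∈ ({s} : Set V) := heq ▸ ⟨Or.inl rfl, hw⟩
    have hts : t ∈ ({s} : Set V) := heq ▸ ⟨Or.inr hwt, ht⟩
    rw [Set.mem_singleton_iff] at hws hts
    subst hws hts
    exact (G.irrefl hwt).elim

lemma card_le_three_of_isLeaf_of_inter_eq [Fintype V] (hG : G.Connected) {u w : V}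
    (huw : G.Adj u w) (hu : IsLeaf G u)
    (heq : closedNbr G u ∩ (chosenLeaves G)ᶜ = closedNbr G w ∩ (chosenLeaves G)ᶜ) :
    Fintype.card V ≤ 3 := by
  classical
  have hws : w ∈ supports G := ⟨u, hu, huw.symm⟩
  refine (hG.card_le_of_adj_closed (S := {u, w, supportLeaf G w}) ?_
    (Finset.mem_insert_self u _)).trans Finset.card_le_three
  simp only [Finset.mem_insert, Finset.mem_singleton]
  rintro a (rfl | rfl | rfl) b hab
  · exact Or.inr (Or.inl (hu.eq_of_adj huw hab))
  · by_cases hb : b ∈ chosenLeaves G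
    · exact Or.inr (Or.inr (eq_supportLeaf_of_adj hb hab).2)
    · rcases mem_closedNbr_of_inter_eq heq (Or.inr hab) hb with rfl | hub
      · exact Or.inl rfl
      · exact absurd (hu.eq_of_adj huw hub) (G.ne_of_adj hab).symm
  · exact Or.inr (Or.inl ((supportLeaf_spec hws).1.eq_of_adj (supportLeaf_spec hws).2.symm hab))

lemma neighborSet_eq_of_cliqueFree_of_inter_eq (htf : G.CliqueFree 3) {u w : V}
    (huw : G.Adj u w) (hu : ¬ IsLeaf G u)
    (heq : closedNbr G u ∩ (chosenLeaves G)ᶜ = closedNbr G w ∩ (chosenLeaves G)ᶜ) :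
    u ∈ supports G ∧ G.neighborSet u = {w, supportLeaf G u} := by
  classical
  have hdeleted : ∀ x, G.Adj u x → x ≠ w → x ∈ chosenLeaves G := by
    intro x hux hxw
    by_contra hx
    rcases mem_closedNbr_of_inter_eq heq.symm (Or.inr hux) hx with rfl | hwx
    · exact hxw rfl
    · exact htf {u, w, x} (is3Clique_triple_iff.2 ⟨huw, hux, hwx⟩)
  obtain ⟨x, hux, hxw⟩ : ∃ x, G.Adj u x ∧ x ≠ w := by
    by_contra! h
    exact hu (isLeaf_of_neighborSet_eq (w := w) (Set.ext fun x => ⟨h x, fun hx => hx ▸ huw⟩))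
  obtain ⟨hus, -⟩ := eq_supportLeaf_of_adj (hdeleted x hux hxw) hux
  refine ⟨hus, Set.ext fun y => ⟨fun huy => ?_, ?_⟩⟩
  · by_cases hyw : y = w
    · exact Or.inl hyw
    · exact Or.inr (eq_supportLeaf_of_adj (hdeleted y huy hyw) huy).2
  · rintro (rfl | rfl)
    · exact huw
    · exact (supportLeaf_spec hus).2

lemma eq_of_inter_eq_of_not_mem_chosenLeaves [Fintype V] (hG : G.Connected)
    (hn : 4 ≤ Fintype.card V) (hP4 : IsEmpty (G ≃g pathGraph 4))
    (hcond : Identifiable (G.induce {v : V | ¬ IsLeaf G v}) ∨ G.CliqueFree 3)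
    {u w : V} (hw : w ∉ chosenLeaves G)
    (heq : closedNbr G u ∩ (chosenLeaves G)ᶜ = closedNbr G w ∩ (chosenLeaves G)ᶜ) : u = w := by
  by_contra hne
  have huw : G.Adj u w :=
    (mem_closedNbr_of_inter_eq heq (Or.inl rfl) hw).resolve_left (Ne.symm hne)
  have hul : ¬ IsLeaf G u := fun h => by
    have := card_le_three_of_isLeaf_of_inter_eq hG huw h heq
    omega
  have hwl : ¬ IsLeaf G w := fun h => by
    have := card_le_three_of_isLeaf_of_inter_eq hG huw.symm h heq.symm
    omega
  rcases hcond with hident | htf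
  · exact hne (eq_of_inter_eq_of_identifiable_induce
      (fun x (hx : ¬ IsLeaf G x) hxL => hx (isLeaf_of_mem_chosenLeaves hxL)) hident hul hwl heq)
  · obtain ⟨hus, hNu⟩ := neighborSet_eq_of_cliqueFree_of_inter_eq htf huw hul heq
    obtain ⟨hws, hNw⟩ := neighborSet_eq_of_cliqueFree_of_inter_eq htf huw.symm hwl heq.symm
    refine hP4.false (hG.nonempty_iso_pathGraph_four (b := u) (c := w)
      (fun h => hwl (h ▸ (supportLeaf_spec hus).1)) (fun h => hne (injOn_supportLeaf hus hws h))
      (fun h => hul (h ▸ (supportLeaf_spec hws).1)) (neighborSet_supportLeaf hus)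
      (by rw [hNu, Set.pair_comm]) hNw (neighborSet_supportLeaf hws)).some

end

theorem stmt_1 {V : Type*} [Fintype V] (G : SimpleGraph V)
    (hconn : G.Connected) (hn : 4 ≤ Fintype.card V)
    (hP4 : IsEmpty (G ≃g pathGraph 4))
    (hcond : Identifiable (G.induce {v : V | ¬ IsLeaf G v}) ∨ G.CliqueFree 3) :
    ∃ C : Set V, IsTotalIdCode G C ∧
      C.ncard ≤ Fintype.card V - (supports G).ncard := by
  have hn3 : 3 ≤ Fintype.card V := by omega
  refine ⟨(chosenLeaves G)ᶜ, ⟨exists_adj_not_mem_chosenLeaves hconn hn3, fun u w heq => ?_⟩, ?_⟩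
  · by_cases hw : w ∈ chosenLeaves G
    · exact (eq_of_inter_eq_of_mem_chosenLeaves hconn hn3 hw heq.symm).symm
    · exact eq_of_inter_eq_of_not_mem_chosenLeaves hconn hn hP4 hcond hw heq
  · rw [Set.ncard_compl, Nat.card_eq_fintype_card, ncard_chosenLeaves]
end

section
/- Let G be a connected identifiable graph on n ≥ 3 vertices. Then G has an identifying code of size at most n − s(G) + 1, where s(G) is the number of support vertices of G. -/
open SimpleGraph

/-! Call the core of a non-leaf vertex its closed neighbourhood without the leaves; non-leaf
vertices with equal cores are adjacent and differ only in their leaves. Choose in each core class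
a representative, a non-support vertex if there is one. Leave out of the code every support
vertex that is not a representative, and one leaf of every other support vertex: exactly `s(G)`
vertices. What remains is an identifying code, because a left-out support vertex is replaced by
its representative, which has the same non-leaf neighbours, while all its leaves stay in the code.
The one exception is a support vertex `v` all of whose other non-leaf neighbours are left out.
Then `G` is a clique with pendant leaves, `v` is unique, and putting back one more support vertex
separates `v` from its leaves. -/

namespace IdentifyingCode

open Set
open scoped symmDiff

variable {V : Type*} {G : SimpleGraph V}

theorem _root_.SimpleGraph.Connected.mem_of_forall_adj_mem (hconn : G.Connected) {A : Set V}
    (hA : ∀ a ∈ A, ∀ b, G.Adj a b → b ∈ A) {a : V} (ha : a ∈ A) (v : V) : v ∈ A := by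
  induction (SimpleGraph.reachable_iff_reflTransGen a v).1 (hconn a v) with
  | refl => exact ha
  | tail _ hbc ih => exact hA _ ih _ hbc

theorem mem_closedNbr {v w : V} : w ∈ closedNbr G v ↔ w = v ∨ G.Adj v w := Iff.rfl

theorem self_mem_closedNbr (v : V) : v ∈ closedNbr G v := mem_insert v _

theorem mem_closedNbr_of_adj {v w : V} (h : G.Adj v w) : w ∈ closedNbr G v := mem_insert_of_mem v h

theorem mem_closedNbr_comm {v w : V} : w ∈ closedNbr G v ↔ v ∈ closedNbr G w := by
  rw [mem_closedNbr, mem_closedNbr, eq_comm, G.adj_comm]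

/-- For a leaf, its unique neighbour. -/
noncomputable def supportOf (G : SimpleGraph V) (ℓ : V) : V :=
  @Classical.epsilon V ⟨ℓ⟩ (G.Adj ℓ)

noncomputable def leafOf (G : SimpleGraph V) (s : V) : V :=
  @Classical.epsilon V ⟨s⟩ fun ℓ => ℓ ∈ leaves G ∧ G.Adj s ℓ

section Leaves

variable {ℓ s : V}

theorem eq_supportOf_of_adj (hℓ : ℓ ∈ leaves G) {w : V} (h : G.Adj ℓ w) : w = supportOf G ℓ := by
  obtain ⟨a, ha⟩ := ncard_eq_one.mp hℓ
  have hadj : G.Adj ℓ (supportOf G ℓ) := Classical.epsilon_spec ⟨w, h⟩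
  have hw : w ∈ G.neighborSet ℓ := h
  have hs : supportOf G ℓ ∈ G.neighborSet ℓ := hadj
  rw [ha] at hw hs
  exact hw.trans hs.symm

theorem adj_supportOf (hℓ : ℓ ∈ leaves G) : G.Adj ℓ (supportOf G ℓ) := by
  obtain ⟨a, ha⟩ := ncard_eq_one.mp hℓ
  exact Classical.epsilon_spec ⟨a, (ha ▸ mem_singleton a : a ∈ G.neighborSet ℓ)⟩

theorem supportOf_mem_supports (hℓ : ℓ ∈ leaves G) : supportOf G ℓ ∈ supports G :=
  ⟨ℓ, hℓ, (adj_supportOf hℓ).symm⟩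

theorem mem_closedNbr_of_mem_leaves (hℓ : ℓ ∈ leaves G) {y : V} :
    y ∈ closedNbr G ℓ ↔ y = ℓ ∨ y = supportOf G ℓ := by
  rw [mem_closedNbr]
  exact or_congr_right ⟨eq_supportOf_of_adj hℓ, fun h => h ▸ adj_supportOf hℓ⟩

theorem supportOf_notMem_leaves (hS : ∀ s ∈ supports G, s ∉ leaves G) (hℓ : ℓ ∈ leaves G) :
    supportOf G ℓ ∉ leaves G :=
  hS _ (supportOf_mem_supports hℓ)

theorem leafOf_mem_leaves (hs : s ∈ supports G) : leafOf G s ∈ leaves G :=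
  (Classical.epsilon_spec (p := fun ℓ => ℓ ∈ leaves G ∧ G.Adj s ℓ) hs).1

theorem adj_leafOf (hs : s ∈ supports G) : G.Adj s (leafOf G s) :=
  (Classical.epsilon_spec (p := fun ℓ => ℓ ∈ leaves G ∧ G.Adj s ℓ) hs).2

theorem supportOf_leafOf (hs : s ∈ supports G) : supportOf G (leafOf G s) = s :=
  (eq_supportOf_of_adj (leafOf_mem_leaves hs) (adj_leafOf hs).symm).symm

theorem notMem_leaves_of_mem_supports [Fintype V] (hconn : G.Connected)
    (hn : 3 ≤ Fintype.card V) : ∀ s ∈ supports G, s ∉ leaves G := by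
  rintro s ⟨u, hu, hsu⟩ hs
  have hclosed : ∀ a ∈ ({s, u} : Set V), ∀ b, G.Adj a b → b ∈ ({s, u} : Set V) := by
    rintro a (rfl | rfl) b hab
    · exact .inr ((eq_supportOf_of_adj hs hab).trans (eq_supportOf_of_adj hs hsu).symm)
    · exact .inl ((eq_supportOf_of_adj hu hab).trans (eq_supportOf_of_adj hu hsu.symm).symm)
  have huniv : ({s, u} : Set V) = univ :=
    eq_univ_of_forall (hconn.mem_of_forall_adj_mem hclosed (mem_insert s _))
  have := ncard_insert_le s ({u} : Set V)
  rw [huniv, ncard_univ, Nat.card_eq_fintype_card, ncard_singleton] at this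
  omega

end Leaves

def core (G : SimpleGraph V) (w : V) : Set V := closedNbr G w \ leaves G

def IsCoreRep (G : SimpleGraph V) (A : Set V) (x : V) : Prop :=
  x ∉ leaves G ∧ core G x = A ∧
    (x ∈ supports G → ∀ y ∉ leaves G, core G y = A → y ∈ supports G)

noncomputable def coreRep (G : SimpleGraph V) (w : V) : V :=
  @Classical.epsilon V ⟨w⟩ (IsCoreRep G (core G w))

def nonRep (G : SimpleGraph V) : Set V := {x | x ∈ supports G ∧ coreRep G x ≠ x}

noncomputable def dropped (G : SimpleGraph V) : Set V :=
  leafOf G '' (supports G \ nonRep G) ∪ nonRep G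

section Core

variable {u w x : V}

theorem mem_core_self (hw : w ∉ leaves G) : w ∈ core G w := ⟨self_mem_closedNbr w, hw⟩

theorem closedNbr_eq_core (hw : w ∉ leaves G) (hwS : w ∉ supports G) :
    closedNbr G w = core G w := by
  refine Set.ext fun y => ⟨fun hy => ⟨hy, fun hyl => ?_⟩, fun hy => hy.1⟩
  rcases mem_closedNbr.mp hy with rfl | hadj
  · exact hw hyl
  · exact hwS ⟨y, hyl, hadj⟩

theorem isCoreRep_coreRep (hw : w ∉ leaves G) : IsCoreRep G (core G w) (coreRep G w) := by
  apply Classical.epsilon_spec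
  by_cases h : ∃ y ∉ leaves G, core G y = core G w ∧ y ∉ supports G
  · obtain ⟨y, hy, hcore, hyS⟩ := h
    exact ⟨y, hy, hcore, fun h => absurd h hyS⟩
  · push Not at h
    exact ⟨w, hw, rfl, fun _ => h⟩

theorem coreRep_congr (h : core G u = core G w) : coreRep G u = coreRep G w := by
  unfold coreRep
  rw [h]

theorem nonRep_subset_supports : nonRep G ⊆ supports G := fun _ hx => hx.1

theorem exists_rep_of_mem_nonRep (hx : x ∉ leaves G) (hxX : x ∈ nonRep G) :
    ∃ r ∉ leaves G, r ∉ nonRep G ∧ core G r = core G x ∧ r ≠ x := by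
  obtain ⟨hr, hcore, -⟩ := isCoreRep_coreRep hx
  refine ⟨coreRep G x, hr, fun hrX => hrX.2 ?_, hcore, hxX.2⟩
  exact coreRep_congr hcore

theorem eq_of_core_eq (hu : u ∉ leaves G) (huS : u ∈ supports G) (huX : u ∉ nonRep G)
    (hw : w ∉ leaves G) (hwX : w ∉ nonRep G) (h : core G u = core G w) : u = w := by
  have hrep_u : coreRep G u = u := not_not.mp fun hne => huX ⟨huS, hne⟩
  have hrep_w : coreRep G w = u := (coreRep_congr h).symm.trans hrep_u
  have hwS : w ∈ supports G :=
    (isCoreRep_coreRep hu).2.2 (by rwa [hrep_u]) w hw h.symm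
  exact hrep_w.symm.trans (not_not.mp fun hne => hwX ⟨hwS, hne⟩)

end Core

section Dropped

variable {ℓ w x : V}

theorem mem_dropped_iff_of_notMem_leaves (hw : w ∉ leaves G) :
    w ∈ dropped G ↔ w ∈ nonRep G := by
  refine ⟨?_, Or.inr⟩
  rintro (⟨s, hs, rfl⟩ | hX)
  · exact absurd (leafOf_mem_leaves hs.1) hw
  · exact hX

theorem eq_leafOf_of_mem_dropped (hS : ∀ s ∈ supports G, s ∉ leaves G) (hℓ : ℓ ∈ leaves G)
    (h : ℓ ∈ dropped G) : ℓ = leafOf G (supportOf G ℓ) ∧ supportOf G ℓ ∉ nonRep G := by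
  rcases h with ⟨s, ⟨hsS, hsX⟩, rfl⟩ | hX
  · rw [supportOf_leafOf hsS]
    exact ⟨rfl, hsX⟩
  · exact absurd hℓ (hS ℓ hX.1)

theorem leafOf_notMem_dropped (hS : ∀ s ∈ supports G, s ∉ leaves G) (hx : x ∈ nonRep G) :
    leafOf G x ∉ dropped G := fun h => by
  have := (eq_leafOf_of_mem_dropped hS (leafOf_mem_leaves hx.1) h).2
  rw [supportOf_leafOf hx.1] at this
  exact this hx

theorem ncard_dropped [Finite V] (hS : ∀ s ∈ supports G, s ∉ leaves G) :
    (dropped G).ncard = (supports G).ncard := by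
  have hinj : InjOn (leafOf G) (supports G \ nonRep G) := fun a ha b hb h => by
    rw [← supportOf_leafOf ha.1, h, supportOf_leafOf hb.1]
  have hdisj : Disjoint (leafOf G '' (supports G \ nonRep G)) (nonRep G) := by
    rw [Set.disjoint_left]
    rintro _ ⟨s, hs, rfl⟩ hX
    exact hS _ hX.1 (leafOf_mem_leaves hs.1)
  rw [dropped, ncard_union_eq hdisj, hinj.ncard_image,
    ncard_sdiff_add_ncard_of_subset nonRep_subset_supports]

theorem exists_mem_closedNbr_notMem_dropped (hS : ∀ s ∈ supports G, s ∉ leaves G) (v : V) :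
    ∃ y ∈ closedNbr G v, y ∉ dropped G := by
  by_cases hvD : v ∉ dropped G
  · exact ⟨v, self_mem_closedNbr v, hvD⟩
  rw [not_not] at hvD
  by_cases hv : v ∈ leaves G
  · refine ⟨supportOf G v, mem_closedNbr_of_adj (adj_supportOf hv), ?_⟩
    rw [mem_dropped_iff_of_notMem_leaves (supportOf_notMem_leaves hS hv)]
    exact (eq_leafOf_of_mem_dropped hS hv hvD).2
  · obtain ⟨r, hr, hrX, hcore, -⟩ :=
      exists_rep_of_mem_nonRep hv ((mem_dropped_iff_of_notMem_leaves hv).mp hvD)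
    refine ⟨r, (hcore ▸ mem_core_self hr : r ∈ core G v).1, ?_⟩
    rwa [mem_dropped_iff_of_notMem_leaves hr]

end Dropped

def Separates (G : SimpleGraph V) (D : Set V) (u v : V) : Prop :=
  ∃ y ∉ D, y ∈ closedNbr G u ∆ closedNbr G v

section Separates

variable {D D' : Set V} {ℓ ℓ' u v w x y : V}

theorem Separates.symm (h : Separates G D u v) : Separates G D v u := by
  obtain ⟨y, hyD, hy⟩ := h
  exact ⟨y, hyD, symmDiff_comm (closedNbr G u) _ ▸ hy⟩

theorem Separates.mono (hD : D' ⊆ D) (h : Separates G D u v) : Separates G D' u v := by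
  obtain ⟨y, hyD, hy⟩ := h
  exact ⟨y, fun h => hyD (hD h), hy⟩

theorem separates_of_mem (hyD : y ∉ D) (hu : y ∈ closedNbr G u) (hv : y ∉ closedNbr G v) :
    Separates G D u v :=
  ⟨y, hyD, .inl ⟨hu, hv⟩⟩

theorem isIdCode_compl (hdom : ∀ v, ∃ y ∈ closedNbr G v, y ∉ D)
    (hsep : ∀ u v, u ≠ v → Separates G D u v) : IsIdCode G Dᶜ := by
  refine ⟨fun v => ?_, fun u v h => by_contra fun huv => ?_⟩
  · obtain ⟨y, hy, hyD⟩ := hdom v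
    exact ⟨y, hy, hyD⟩
  · obtain ⟨y, hyD, hy | hy⟩ := hsep u v huv
    · exact hy.2 ((Set.ext_iff.mp h y).mp ⟨hy.1, hyD⟩).1
    · exact hy.2 ((Set.ext_iff.mp h y).mpr ⟨hy.1, hyD⟩).1

theorem isIdCode_univ (hid : Identifiable G) : IsIdCode G univ :=
  ⟨fun v => ⟨v, self_mem_closedNbr v, trivial⟩,
    fun u v h => hid u v (by rwa [inter_univ, inter_univ] at h)⟩

theorem separates_dropped_of_mem_leaves (hS : ∀ s ∈ supports G, s ∉ leaves G)
    (hℓ : ℓ ∈ leaves G) (hℓ' : ℓ' ∈ leaves G) (hne : ℓ ≠ ℓ') : Separates G (dropped G) ℓ ℓ' := by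
  have notMem : ∀ {a b}, a ∈ leaves G → b ∈ leaves G → a ≠ b → a ∉ closedNbr G b :=
    fun ha hb hab h => ((mem_closedNbr_of_mem_leaves hb).mp h).elim hab
      fun h => supportOf_notMem_leaves hS hb (h ▸ ha)
  by_cases h : ℓ ∈ dropped G
  swap
  · exact separates_of_mem h (self_mem_closedNbr ℓ) (notMem hℓ hℓ' hne)
  by_cases h' : ℓ' ∈ dropped G
  swap
  · exact (separates_of_mem h' (self_mem_closedNbr ℓ') (notMem hℓ' hℓ hne.symm)).symm
  -- both leaves are dropped, hence are the chosen leaves of two distinct representatives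
  obtain ⟨hℓeq, hX⟩ := eq_leafOf_of_mem_dropped hS hℓ h
  obtain ⟨hℓ'eq, -⟩ := eq_leafOf_of_mem_dropped hS hℓ' h'
  have hσ : supportOf G ℓ ≠ supportOf G ℓ' := fun hσ =>
    hne (hℓeq.trans ((congrArg (leafOf G) hσ).trans hℓ'eq.symm))
  have hσl := supportOf_notMem_leaves hS hℓ
  refine separates_of_mem ((mem_dropped_iff_of_notMem_leaves hσl).not.mpr hX)
    (mem_closedNbr_of_adj (adj_supportOf hℓ)) ?_
  rw [mem_closedNbr_of_mem_leaves hℓ']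
  exact fun h => h.elim (fun h => hσl (h ▸ hℓ')) hσ

theorem separates_dropped_of_mem_nonRep (hS : ∀ s ∈ supports G, s ∉ leaves G)
    (hx : x ∈ nonRep G) (hv : v ≠ x) (hv' : v ≠ leafOf G x) : Separates G (dropped G) x v := by
  refine separates_of_mem (leafOf_notMem_dropped hS hx) (mem_closedNbr_of_adj (adj_leafOf hx.1)) ?_
  rw [mem_closedNbr_comm, mem_closedNbr_of_mem_leaves (leafOf_mem_leaves hx.1),
    supportOf_leafOf hx.1]
  exact fun h => h.elim hv' hv

theorem separates_dropped_of_ne_supportOf (hS : ∀ s ∈ supports G, s ∉ leaves G)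
    (hℓ : ℓ ∈ leaves G) (hw : w ∉ leaves G) (hne : w ≠ supportOf G ℓ) :
    Separates G (dropped G) w ℓ := by
  by_cases hwD : w ∈ dropped G
  · have hX := (mem_dropped_iff_of_notMem_leaves hw).mp hwD
    refine separates_dropped_of_mem_nonRep hS hX (fun h => hw (h ▸ hℓ)) fun h => hne ?_
    rw [h, supportOf_leafOf hX.1]
  · refine separates_of_mem hwD (self_mem_closedNbr w) fun h => ?_
    exact ((mem_closedNbr_of_mem_leaves hℓ).mp h).elim (fun h => hw (h ▸ hℓ)) hne

/-- A non-dropped representative of `y` sees the same non-leaf vertices as `y`. -/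
theorem separates_dropped_of_mem_core_diff {a b : V} (ha : a ∉ leaves G) (hb : b ∉ leaves G)
    (hy : y ∈ core G a \ core G b) : Separates G (dropped G) a b := by
  obtain ⟨⟨hya, hyl⟩, hyb⟩ := hy
  have hyb' : y ∉ closedNbr G b := fun h => hyb ⟨h, hyl⟩
  by_cases hyD : y ∈ dropped G
  · obtain ⟨r, hr, hrX, hcore, -⟩ :=
      exists_rep_of_mem_nonRep hyl ((mem_dropped_iff_of_notMem_leaves hyl).mp hyD)
    refine separates_of_mem ((mem_dropped_iff_of_notMem_leaves hr).not.mpr hrX) ?_ fun hrb => ?_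
    · have har : a ∈ core G r := hcore ▸ ⟨mem_closedNbr_comm.mp hya, ha⟩
      exact mem_closedNbr_comm.mp har.1
    · have hby : b ∈ core G y := hcore ▸ ⟨mem_closedNbr_comm.mp hrb, hb⟩
      exact hyb' (mem_closedNbr_comm.mp hby.1)
  · exact separates_of_mem hyD hya hyb'

theorem separates_dropped_of_notMem_leaves (hS : ∀ s ∈ supports G, s ∉ leaves G)
    (hid : Identifiable G) (hu : u ∉ leaves G) (hw : w ∉ leaves G) (hne : u ≠ w) :
    Separates G (dropped G) u w := by
  by_cases hcore : core G u = core G w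
  · by_cases huX : u ∈ nonRep G
    · exact separates_dropped_of_mem_nonRep hS huX hne.symm
        fun h => hw (h ▸ leafOf_mem_leaves huX.1)
    by_cases hwX : w ∈ nonRep G
    · exact (separates_dropped_of_mem_nonRep hS hwX hne
        fun h => hu (h ▸ leafOf_mem_leaves hwX.1)).symm
    have huS : u ∉ supports G := fun huS => hne (eq_of_core_eq hu huS huX hw hwX hcore)
    have hwS : w ∉ supports G := fun hwS => hne (eq_of_core_eq hw hwS hwX hu huX hcore.symm).symm
    exact absurd (hid u w (by rw [closedNbr_eq_core hu huS, closedNbr_eq_core hw hwS, hcore])) hne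
  · obtain ⟨y, hy | hy⟩ := symmDiff_nonempty.mpr hcore
    · exact separates_dropped_of_mem_core_diff hu hw hy
    · exact (separates_dropped_of_mem_core_diff hw hu hy).symm

theorem isIdCode_compl_of_subset_dropped (hS : ∀ s ∈ supports G, s ∉ leaves G)
    (hid : Identifiable G) (hD : D ⊆ dropped G)
    (hleaf : ∀ ℓ ∈ leaves G, Separates G D (supportOf G ℓ) ℓ) : IsIdCode G Dᶜ := by
  refine isIdCode_compl (fun v => ?_) ?_
  · obtain ⟨y, hy, hyD⟩ := exists_mem_closedNbr_notMem_dropped hS v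
    exact ⟨y, hy, fun h => hyD (hD h)⟩
  have sep_leaf : ∀ u ℓ, u ≠ ℓ → ℓ ∈ leaves G → Separates G D u ℓ := by
    intro u ℓ hne hℓ
    by_cases hu : u ∈ leaves G
    · exact (separates_dropped_of_mem_leaves hS hu hℓ hne).mono hD
    by_cases hσ : u = supportOf G ℓ
    · rw [hσ]
      exact hleaf ℓ hℓ
    · exact (separates_dropped_of_ne_supportOf hS hℓ hu hσ).mono hD
  intro u w hne
  by_cases hw : w ∈ leaves G
  · exact sep_leaf u w hne hw
  by_cases hu : u ∈ leaves G
  · exact (sep_leaf w u hne.symm hu).symm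
  · exact (separates_dropped_of_notMem_leaves hS hid hu hw hne).mono hD

end Separates

/-- The only obstruction to `(dropped G)ᶜ` being an identifying code: a leaf of `v` may not be
separated from `v` itself. -/
def IsEnclosed (G : SimpleGraph V) (v : V) : Prop :=
  v ∈ supports G ∧ core G v \ {v} ⊆ nonRep G

section Enclosed

variable {ℓ v w x : V}

theorem separates_dropped_supportOf (hℓ : ℓ ∈ leaves G) (h : ¬ IsEnclosed G (supportOf G ℓ)) :
    Separates G (dropped G) (supportOf G ℓ) ℓ := by
  obtain ⟨y, ⟨hy, hyne⟩, hyX⟩ := not_subset.mp fun hsub => h ⟨supportOf_mem_supports hℓ, hsub⟩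
  refine separates_of_mem ((mem_dropped_iff_of_notMem_leaves hy.2).not.mpr hyX) hy.1 ?_
  rw [mem_closedNbr_of_mem_leaves hℓ]
  exact fun h => h.elim (fun h => hy.2 (h ▸ hℓ)) hyne

theorem notMem_nonRep_of_isEnclosed (hS : ∀ s ∈ supports G, s ∉ leaves G)
    (hv : IsEnclosed G v) : v ∉ nonRep G := fun hvX => by
  obtain ⟨r, hr, hrX, hcore, hrv⟩ := exists_rep_of_mem_nonRep (hS v hv.1) hvX
  exact hrX (hv.2 ⟨hcore ▸ mem_core_self hr, hrv⟩)

theorem core_eq_of_isEnclosed (hS : ∀ s ∈ supports G, s ∉ leaves G) (hv : IsEnclosed G v)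
    (hx : x ∈ core G v) : core G x = core G v := by
  rcases eq_or_ne x v with rfl | hxv
  · rfl
  -- the representative of `x` is a non-leaf neighbour of `v` outside `nonRep G`, so it is `v`
  obtain ⟨r, hr, hrX, hcore, -⟩ := exists_rep_of_mem_nonRep hx.2 (hv.2 ⟨hx, hxv⟩)
  have hvr : v ∈ core G r := hcore ▸ ⟨mem_closedNbr_comm.mp hx.1, hS v hv.1⟩
  have hrv : r = v :=
    not_not.mp fun hrv => hrX (hv.2 ⟨⟨mem_closedNbr_comm.mp hvr.1, hr⟩, hrv⟩)
  rw [← hcore, hrv]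

theorem mem_core_of_isEnclosed (hconn : G.Connected) (hS : ∀ s ∈ supports G, s ∉ leaves G)
    (hv : IsEnclosed G v) (hw : w ∉ leaves G) : w ∈ core G v := by
  let A := {a | a ∈ core G v ∨ (a ∈ leaves G ∧ supportOf G a ∈ core G v)}
  have hA : ∀ a ∈ A, ∀ b, G.Adj a b → b ∈ A := by
    rintro a (ha | ⟨hal, hσ⟩) b hab
    · by_cases hb : b ∈ leaves G
      · exact .inr ⟨hb, eq_supportOf_of_adj hb hab.symm ▸ ha⟩
      · exact .inl (core_eq_of_isEnclosed hS hv ha ▸ ⟨mem_closedNbr_of_adj hab, hb⟩)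
    · exact .inl (eq_supportOf_of_adj hal hab ▸ hσ)
  exact (hconn.mem_of_forall_adj_mem hA (.inl (mem_core_self (hS v hv.1))) w).resolve_right
    fun h => hw h.1

theorem eq_of_isEnclosed (hconn : G.Connected) (hS : ∀ s ∈ supports G, s ∉ leaves G)
    (hv : IsEnclosed G v) (hw : IsEnclosed G w) : w = v :=
  not_not.mp fun hwv => notMem_nonRep_of_isEnclosed hS hw
    (hv.2 ⟨mem_core_of_isEnclosed hconn hS hv (hS w hw.1), hwv⟩)

/-- Put back a second support vertex `t` if some `v` is enclosed: it separates `v` from its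
leaves. -/
theorem exists_subset_dropped [Finite V] (hconn : G.Connected)
    (hS : ∀ s ∈ supports G, s ∉ leaves G) (hs : 1 < (supports G).ncard) :
    ∃ D ⊆ dropped G, (supports G).ncard ≤ D.ncard + 1 ∧
      ∀ ℓ ∈ leaves G, Separates G D (supportOf G ℓ) ℓ := by
  by_cases henc : ∃ v, IsEnclosed G v
  · obtain ⟨v, hv⟩ := henc
    obtain ⟨t, htS, htv⟩ := exists_ne_of_one_lt_ncard hs v
    have htl := hS t htS
    have htcore := mem_core_of_isEnclosed hconn hS hv htl
    have htD : t ∈ dropped G :=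
      (mem_dropped_iff_of_notMem_leaves htl).mpr (hv.2 ⟨htcore, htv⟩)
    refine ⟨dropped G \ {t}, sdiff_subset, ?_, fun ℓ hℓ => ?_⟩
    · rw [ncard_sdiff_singleton_add_one htD, ncard_dropped hS]
    by_cases hσ : supportOf G ℓ = v
    · rw [hσ]
      refine separates_of_mem (fun h => h.2 rfl) htcore.1 ?_
      rw [mem_closedNbr_of_mem_leaves hℓ, hσ]
      exact fun h => h.elim (fun h => htl (h ▸ hℓ)) htv
    · exact (separates_dropped_supportOf hℓ fun h => hσ (eq_of_isEnclosed hconn hS hv h)).mono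
        sdiff_subset
  · push Not at henc
    exact ⟨dropped G, subset_rfl, (ncard_dropped hS).ge.trans (Nat.le_succ _),
      fun ℓ hℓ => separates_dropped_supportOf hℓ (henc _)⟩

end Enclosed

end IdentifyingCode

open Set IdentifyingCode

theorem stmt_2 {V : Type*} [Fintype V] (G : SimpleGraph V)
    (hconn : G.Connected) (hid : Identifiable G) (hn : 3 ≤ Fintype.card V) :
    ∃ C : Set V, IsIdCode G C ∧
      C.ncard ≤ Fintype.card V - (supports G).ncard + 1 := by
  have hS := notMem_leaves_of_mem_supports hconn hn
  rcases le_or_gt (supports G).ncard 1 with hs | hs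
  · refine ⟨univ, isIdCode_univ hid, ?_⟩
    rw [ncard_univ, Nat.card_eq_fintype_card]
    omega
  · obtain ⟨D, hD, hDcard, hleaf⟩ := exists_subset_dropped hconn hS hs
    refine ⟨Dᶜ, isIdCode_compl_of_subset_dropped hS hid hD hleaf, ?_⟩
    rw [ncard_compl, Nat.card_eq_fintype_card]
    omega
end

section
/- Let G be a connected bipartite graph on n ≥ 3 vertices that has no twins of degree 2 or greater (i.e., no two distinct vertices of degree at least 2 share the same open neighbourhood or the same closed neighbourhood). Then γ^ID(G) ≤ (n + ℓ(G))/2, where ℓ(G) is the number of leaves of G. -/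
open SimpleGraph

/-!
Fix a side `A` of the bipartition and let `L` be the leaves outside `A`. Take `A`, every leaf
of `L` that shares its support with another leaf, and, for each remaining leaf, one non-leaf
neighbour of its support (it exists because `G` is connected with at least three vertices).
Vertices of `A` are separated by `A` itself, and vertices outside `A` by their neighbourhoods,
which are distinct by twin-freeness except among leaves, where the added vertices do the job.
This code has at most `|A| + |L|` vertices; adding the bounds for both sides gives
`n + ℓ(G)`, so one of the two codes has at most `(n + ℓ(G)) / 2` vertices.
-/

namespace SimpleGraph

variable {V : Type*} {G : SimpleGraph V}

lemma IsBipartiteWith.compl_right {s t : Set V} (h : G.IsBipartiteWith s t) :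
    G.IsBipartiteWith s sᶜ where
  disjoint := disjoint_compl_right
  mem_of_adj _ _ hvw :=
    (h.mem_of_adj hvw).imp (And.imp_right fun hw ↦ h.disjoint.subset_compl_left hw)
      (And.imp_left fun hv ↦ h.disjoint.subset_compl_left hv)

lemma Colorable.exists_isBipartiteWith_compl (h : G.Colorable 2) :
    ∃ A : Set V, G.IsBipartiteWith A Aᶜ :=
  let ⟨A, _, hA⟩ := IsBipartite.exists_isBipartiteWith h
  ⟨A, hA.compl_right⟩

lemma Walk.mem_of_forall_adj_mem {S : Set V} (hS : ∀ x ∈ S, ∀ y, G.Adj x y → y ∈ S)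
    {u v : V} (p : G.Walk u v) (hu : u ∈ S) : v ∈ S := by
  induction p with
  | nil => exact hu
  | cons h _ ih => exact ih (hS _ hu _ h)

lemma Connected.card_le_two_of_neighborSet_eq_singleton [Fintype V] (hG : G.Connected)
    {x w : V} (hx : G.neighborSet x = {w}) (hw : G.neighborSet w = {x}) :
    Fintype.card V ≤ 2 := by
  have hclosed : ∀ a ∈ ({x, w} : Set V), ∀ b, G.Adj a b → b ∈ ({x, w} : Set V) := by
    rintro a (rfl | rfl) b hab
    · exact Or.inr (hx ▸ hab : b ∈ ({w} : Set V))
    · exact Or.inl (hw ▸ hab : b ∈ ({x} : Set V))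
  have huniv : Set.univ ⊆ ({x, w} : Set V) := fun z _ ↦
    (hG x z).elim fun p ↦ p.mem_of_forall_adj_mem hclosed (Or.inl rfl)
  calc Fintype.card V = (Set.univ : Set V).ncard := by simp
    _ ≤ ({x, w} : Set V).ncard := Set.ncard_le_ncard huniv
    _ ≤ ({w} : Set V).ncard + 1 := Set.ncard_insert_le x {w}
    _ = 2 := by rw [Set.ncard_singleton]

end SimpleGraph

section Bipartite

variable {V : Type*} {G : SimpleGraph V} {A C : Set V}

lemma closedNbr_inter_inter_of_mem (hA : G.IsBipartiteWith A Aᶜ) (hAC : A ⊆ C) {v : V}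
    (hv : v ∈ A) : closedNbr G v ∩ C ∩ A = {v} := by
  ext x
  constructor
  · rintro ⟨⟨rfl | hvx, -⟩, hx⟩
    · rfl
    · exact absurd hx (hA.mem_of_mem_adj hv hvx)
  · rintro rfl
    exact ⟨⟨Set.mem_insert x _, hAC hv⟩, hv⟩

lemma closedNbr_inter_inter_of_notMem (hA : G.IsBipartiteWith A Aᶜ) (hAC : A ⊆ C) {v : V}
    (hv : v ∉ A) : closedNbr G v ∩ C ∩ A = G.neighborSet v := by
  ext x
  constructor
  · rintro ⟨⟨rfl | hvx, -⟩, hx⟩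
    · exact absurd hx hv
    · exact hvx
  · intro hvx
    have hx : x ∈ A := hA.mem_of_mem_adj' (Set.mem_compl hv) hvx.symm
    exact ⟨⟨Or.inr hvx, hAC hx⟩, hx⟩

lemma closedNbr_inter_inter_compl_of_notMem (hA : G.IsBipartiteWith A Aᶜ) {v : V} (hv : v ∉ A) :
    closedNbr G v ∩ C ∩ Aᶜ = {v} ∩ C := by
  ext x
  constructor
  · rintro ⟨⟨rfl | hvx, hx⟩, hxA⟩
    · exact ⟨rfl, hx⟩
    · exact absurd (hA.mem_of_mem_adj' (Set.mem_compl hv) hvx.symm) hxA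
  · rintro ⟨rfl, hx⟩
    exact ⟨⟨Set.mem_insert x _, hx⟩, hv⟩

lemma isIdCode_of_part_subset (hA : G.IsBipartiteWith A Aᶜ) (hadj : ∀ v, ∃ w, G.Adj v w)
    (hAC : A ⊆ C)
    (hsep : ∀ u v, u ∉ A → v ∉ A → u ∉ C → v ∉ C → G.neighborSet u = G.neighborSet v → u = v)
    (hleaf : ∀ v x, v ∉ A → G.neighborSet v = {x} → ∃ y ∈ C, G.Adj x y ∧ y ≠ v) :
    IsIdCode G C := by
  refine ⟨fun v ↦ ?_, fun u v huv ↦ ?_⟩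
  · by_cases hv : v ∈ A
    · exact ⟨v, Set.mem_insert v _, hAC hv⟩
    · obtain ⟨w, hvw⟩ := hadj v
      exact ⟨w, Or.inr hvw, hAC (hA.mem_of_mem_adj' (Set.mem_compl hv) hvw.symm)⟩
  have mixed : ∀ u v, u ∈ A → v ∉ A → closedNbr G u ∩ C ≠ closedNbr G v ∩ C := by
    intro u v hu hv huv
    have hNv : G.neighborSet v = {u} := by
      rw [← closedNbr_inter_inter_of_notMem hA hAC hv, ← huv,
        closedNbr_inter_inter_of_mem hA hAC hu]
    obtain ⟨y, hyC, huy, hyv⟩ := hleaf v u hv hNv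
    have hy : y ∈ closedNbr G v ∩ C := huv ▸ ⟨Or.inr huy, hyC⟩
    obtain rfl | hvy := hy.1
    · exact hyv rfl
    · obtain rfl : y = u := (hNv ▸ hvy : y ∈ ({u} : Set V))
      exact G.irrefl huy
  by_cases hu : u ∈ A <;> by_cases hv : v ∈ A
  · simpa [closedNbr_inter_inter_of_mem hA hAC, hu, hv] using congrArg (· ∩ A) huv
  · exact absurd huv (mixed u v hu hv)
  · exact absurd huv.symm (mixed v u hv hu)
  have hB := congrArg (· ∩ Aᶜ) huv
  simp only [closedNbr_inter_inter_compl_of_notMem hA hu,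
    closedNbr_inter_inter_compl_of_notMem hA hv] at hB
  by_cases huC : u ∈ C
  · exact ((hB ▸ ⟨rfl, huC⟩ : u ∈ {v} ∩ C)).1
  by_cases hvC : v ∈ C
  · exact ((hB ▸ ⟨rfl, hvC⟩ : v ∈ {u} ∩ C)).1.symm
  refine hsep u v hu hv huC hvC ?_
  rw [← closedNbr_inter_inter_of_notMem hA hAC hu, huv,
    closedNbr_inter_inter_of_notMem hA hAC hv]

lemma two_le_ncard_neighborSet [Finite V] {v : V} (hv : ∃ w, G.Adj v w) (hleaf : ¬ IsLeaf G v) :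
    2 ≤ (G.neighborSet v).ncard := by
  have hpos : 0 < (G.neighborSet v).ncard := (Set.ncard_pos (Set.toFinite _)).2 hv
  have hne : (G.neighborSet v).ncard ≠ 1 := hleaf
  omega

def soleLeaves (G : SimpleGraph V) (A : Set V) : Set V :=
  {w | w ∈ leaves G \ A ∧ ∀ x w', G.Adj w x → G.Adj x w' → IsLeaf G w' → w' = w}

lemma exists_adj_not_isLeaf_of_mem_soleLeaves [Fintype V] (hG : G.Connected)
    (hn : 3 ≤ Fintype.card V) {w : V} (hw : w ∈ soleLeaves G A) :
    ∃ x y, G.neighborSet w = {x} ∧ G.Adj x y ∧ ¬ IsLeaf G y := by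
  obtain ⟨x, hx⟩ := Set.ncard_eq_one.1 hw.1.1
  have hwx : G.Adj w x := (hx ▸ rfl : x ∈ G.neighborSet w)
  by_contra! h
  -- otherwise `w` and its support form a component `K₂`
  have hNx : G.neighborSet x = {w} := Set.eq_singleton_iff_unique_mem.2
    ⟨hwx.symm, fun y hxy ↦ hw.2 x y hwx hxy (h x y hx hxy)⟩
  have := hG.card_le_two_of_neighborSet_eq_singleton hNx hx
  omega

lemma exists_isIdCode_ncard_le [Fintype V] (hG : G.Connected) (hn : 3 ≤ Fintype.card V)
    (hA : G.IsBipartiteWith A Aᶜ)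
    (htwin : ∀ u v, u ≠ v → 2 ≤ (G.neighborSet u).ncard → 2 ≤ (G.neighborSet v).ncard →
      G.neighborSet u ≠ G.neighborSet v) :
    ∃ C : Set V, IsIdCode G C ∧ C.ncard ≤ A.ncard + (leaves G \ A).ncard := by
  have : Nontrivial V := Fintype.one_lt_card_iff_nontrivial.1 (by omega)
  have hadj := hG.preconnected.exists_adj_of_nontrivial
  choose! s g hs hsg hg using fun w (hw : w ∈ soleLeaves G A) ↦
    exists_adj_not_isLeaf_of_mem_soleLeaves hG hn hw
  set S := soleLeaves G A
  refine ⟨A ∪ ((leaves G \ A) \ S) ∪ g '' S,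
    isIdCode_of_part_subset hA hadj (Set.subset_union_left.trans Set.subset_union_left) ?_ ?_, ?_⟩
  · intro u v hu hv huC hvC huv
    by_cases hul : IsLeaf G u
    · have huS : u ∈ S := by_contra fun h ↦ huC (Or.inl (Or.inr ⟨⟨hul, hu⟩, h⟩))
      obtain ⟨x, hx⟩ := Set.ncard_eq_one.1 hul
      have hvx : G.Adj v x := (huv ▸ hx ▸ rfl : x ∈ G.neighborSet v)
      have hvl : IsLeaf G v := by rw [IsLeaf, ← huv]; exact hul
      exact (huS.2 x v (hx ▸ rfl : x ∈ G.neighborSet u) hvx.symm hvl).symm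
    · by_contra hne
      have h2 := two_le_ncard_neighborSet (hadj u) hul
      exact htwin u v hne h2 (huv ▸ h2) huv
  · intro v x hv hvx
    have hvl : IsLeaf G v := by rw [IsLeaf, hvx, Set.ncard_singleton]
    by_cases hvS : v ∈ S
    · refine ⟨g v, Or.inr ⟨v, hvS, rfl⟩, ?_, fun h ↦ hg v hvS (h.symm ▸ hvl)⟩
      obtain rfl : s v = x := Set.singleton_eq_singleton_iff.1 ((hs v hvS).symm.trans hvx)
      exact hsg v hvS
    · obtain ⟨x', w, hvx', hx'w, hw, hwv⟩ :
          ∃ x' w, G.Adj v x' ∧ G.Adj x' w ∧ IsLeaf G w ∧ w ≠ v := by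
        by_contra! h
        exact hvS ⟨⟨hvl, hv⟩, h⟩
      obtain rfl : x' = x := (hvx ▸ hvx' : x' ∈ ({x} : Set V))
      have hwA : w ∉ A :=
        hA.mem_of_mem_adj (hA.mem_of_mem_adj' (Set.mem_compl hv) hvx'.symm) hx'w
      have hwS : w ∉ S := fun hwS ↦ hwv (hwS.2 x' v hx'w.symm hvx'.symm hvl).symm
      exact ⟨w, Or.inl (Or.inr ⟨⟨hw, hwA⟩, hwS⟩), hx'w, hwv⟩
  · calc (A ∪ ((leaves G \ A) \ S) ∪ g '' S).ncard
        ≤ A.ncard + ((leaves G \ A) \ S).ncard + (g '' S).ncard :=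
          (Set.ncard_union_le _ _).trans (by gcongr; exact Set.ncard_union_le _ _)
      _ ≤ A.ncard + ((leaves G \ A) \ S).ncard + S.ncard :=
          Nat.add_le_add_left (Set.ncard_image_le (Set.toFinite S)) _
      _ = A.ncard + (leaves G \ A).ncard := by
          rw [add_assoc, Set.ncard_sdiff_add_ncard_of_subset fun w hw ↦ hw.1]

end Bipartite

theorem stmt_3 {V : Type*} [Fintype V] (G : SimpleGraph V)
    (hconn : G.Connected) (hbip : G.Colorable 2) (hn : 3 ≤ Fintype.card V)
    (htwin : ∀ u v : V, u ≠ v → 2 ≤ (G.neighborSet u).ncard →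
      2 ≤ (G.neighborSet v).ncard →
      G.neighborSet u ≠ G.neighborSet v ∧ closedNbr G u ≠ closedNbr G v) :
    ∃ C : Set V, IsIdCode G C ∧
      (C.ncard : ℝ) ≤ (Fintype.card V + (leaves G).ncard) / 2 := by
  obtain ⟨A, hA⟩ := hbip.exists_isBipartiteWith_compl
  have hopen := fun u v huv hu hv ↦ (htwin u v huv hu hv).1
  obtain ⟨C₀, hC₀, hC₀card⟩ := exists_isIdCode_ncard_le hconn hn hA hopen
  obtain ⟨C₁, hC₁, hC₁card⟩ := exists_isIdCode_ncard_le hconn hn hA.symm.compl_right hopen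
  have hsides : A.ncard + Aᶜ.ncard = Fintype.card V := by
    rw [Set.ncard_add_ncard_compl, Nat.card_eq_fintype_card]
  have hleaves : (leaves G \ A).ncard + (leaves G \ Aᶜ).ncard = (leaves G).ncard := by
    rw [sdiff_compl, add_comm]
    exact Set.ncard_inter_add_ncard_sdiff_eq_ncard _ _
  obtain ⟨C, hC, hCcard⟩ :
      ∃ C, IsIdCode G C ∧ C.ncard * 2 ≤ Fintype.card V + (leaves G).ncard := by
    rcases le_total C₀.ncard C₁.ncard with h | h
    exacts [⟨C₀, hC₀, by omega⟩, ⟨C₁, hC₁, by omega⟩]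
  refine ⟨C, hC, ?_⟩
  rw [le_div_iff₀ two_pos]
  exact_mod_cast hCcard
end

section
/- Let H be any connected graph of order at least 2, and let G = H∘₂ be its 2-corona (obtained by attaching a pendant path of length 2 to each vertex of H), of order n = 3|V(H)|. Then G is twin-free and γ^ID(G) = 2n/3. -/
/-!
Every identifying code of `H∘₂` contains `(a, 0)`, because `N[(a, 1)] = N[(a, 2)] ∪ {(a, 0)}`,
and a vertex of `N[(a, 2)] = {(a, 1), (a, 2)}`, so it has at least two vertices on each
pendant path. Conversely, the levels `0` and `1` form an identifying code as soon as `H` has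
no isolated vertex; in particular closed neighbourhoods are distinct, and open neighbourhoods
are distinct by direct inspection.
-/

open SimpleGraph

/-- The 2-corona of a graph: to each vertex (v,0) attach a pendant path (v,1)-(v,2). -/
def twoCorona {A : Type*} (H : SimpleGraph A) : SimpleGraph (A × Fin 3) :=
  SimpleGraph.fromRel (fun p q =>
    (p.2 = 0 ∧ q.2 = 0 ∧ H.Adj p.1 q.1) ∨
    (p.1 = q.1 ∧ p.2 = 0 ∧ q.2 = 1) ∨
    (p.1 = q.1 ∧ p.2 = 1 ∧ q.2 = 2))

lemma mem_closedNbr {V : Type*} {G : SimpleGraph V} {u v : V} :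
    v ∈ closedNbr G u ↔ v = u ∨ G.Adj u v := Iff.rfl

namespace IsIdCode

variable {V : Type*} {G : SimpleGraph V} {C : Set V}

lemma identifiable (hC : IsIdCode G C) : Identifiable G :=
  fun u v h => hC.2 u v (by rw [h])

lemma mem_of_closedNbr_eq_insert (hC : IsIdCode G C) {u v w : V} (huv : u ≠ v)
    (h : closedNbr G u = insert w (closedNbr G v)) : w ∈ C := by
  by_contra hw
  exact huv (hC.2 u v (by rw [h, Set.insert_inter_of_notMem hw]))

end IsIdCode

section TwoCorona

variable {A : Type*} {H : SimpleGraph A}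

@[simp]
lemma twoCorona_adj {a b : A} {i j : Fin 3} :
    (twoCorona H).Adj (a, i) (b, j) ↔
      i = 0 ∧ j = 0 ∧ H.Adj a b ∨
      a = b ∧ (i = 0 ∧ j = 1 ∨ i = 1 ∧ j = 0 ∨ i = 1 ∧ j = 2 ∨ i = 2 ∧ j = 1) := by
  rw [twoCorona, fromRel_adj]
  fin_cases i <;> fin_cases j <;> simp [eq_comm (a := a), H.adj_comm b]
  exact fun h => h.ne'

lemma closedNbr_twoCorona_one (a : A) :
    closedNbr (twoCorona H) (a, 1) = insert (a, 0) (closedNbr (twoCorona H) (a, 2)) := by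
  ext ⟨b, j⟩
  fin_cases j <;> simp [mem_closedNbr, eq_comm (a := b)]

lemma twoCorona_neighborSet_injective (hH : ∀ a, ∃ b, H.Adj a b) :
    Function.Injective (twoCorona H).neighborSet := by
  rintro ⟨a, i⟩ ⟨b, j⟩ h
  have hadj (x) : (twoCorona H).Adj (a, i) x ↔ (twoCorona H).Adj (b, j) x := Set.ext_iff.mp h x
  -- an `H`-neighbour tells `(a, 0)` apart from `(a, 2)`
  obtain ⟨c, hc⟩ := hH a
  obtain ⟨d, hd⟩ := hH b
  have := hadj (a, 1); have := hadj (b, 1); have := hadj (a, 2); have := hadj (b, 2)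
  have := hadj (c, 0); have := hadj (d, 0)
  clear h hadj
  fin_cases i <;> fin_cases j <;> simp_all [eq_comm (a := a)]

lemma isIdCode_twoCorona_snd_ne_two (hH : ∀ a, ∃ b, H.Adj a b) :
    IsIdCode (twoCorona H) {p | p.2 ≠ 2} := by
  refine ⟨fun ⟨a, i⟩ => ⟨(a, 1), ?_, by simp⟩, fun ⟨a, i⟩ ⟨b, j⟩ h => ?_⟩
  · fin_cases i <;> simp [mem_closedNbr]
  have hmem (x) : x ∈ closedNbr (twoCorona H) (a, i) ∧ x.2 ≠ 2 ↔
      x ∈ closedNbr (twoCorona H) (b, j) ∧ x.2 ≠ 2 := Set.ext_iff.mp h x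
  -- an `H`-neighbour tells `(a, 0)` apart from `(a, 1)`
  obtain ⟨c, hc⟩ := hH a
  obtain ⟨d, hd⟩ := hH b
  have := hmem (a, 1); have := hmem (b, 1); have := hmem (c, 0); have := hmem (d, 0)
  have := hmem (a, 0); have := hmem (b, 0)
  clear h hmem
  fin_cases i <;> fin_cases j <;> simp_all [mem_closedNbr, eq_comm (a := a)]

lemma twoCorona_twinFree (hH : ∀ a, ∃ b, H.Adj a b) : TwinFree (twoCorona H) :=
  fun u v huv => ⟨fun h => huv (twoCorona_neighborSet_injective hH h),
    fun h => huv ((isIdCode_twoCorona_snd_ne_two hH).identifiable u v h)⟩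

variable [Fintype A]

lemma ncard_setOf_snd_ne_two : {p : A × Fin 3 | p.2 ≠ 2}.ncard = 2 * Fintype.card A := by
  have : {p : A × Fin 3 | p.2 ≠ 2} = Set.univ ×ˢ {2}ᶜ := by ext; simp
  rw [this, Set.ncard_prod, Set.ncard_univ, Set.ncard_compl]
  simp [mul_comm]

open Finset in
lemma IsIdCode.two_mul_card_le_ncard_twoCorona {C : Set (A × Fin 3)}
    (hC : IsIdCode (twoCorona H) C) : 2 * Fintype.card A ≤ C.ncard := by
  classical
  have hfibre (a : A) : 2 ≤ #{p ∈ C.toFinset | p.1 = a} := by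
    have h0 : (a, 0) ∈ C := hC.mem_of_closedNbr_eq_insert (by simp) (closedNbr_twoCorona_one a)
    obtain ⟨⟨b, j⟩, hw, hwC⟩ := hC.1 (a, 2)
    refine one_lt_card.2 ⟨(a, 0), by simp [h0], (b, j), ?_, ?_⟩ <;>
      fin_cases j <;> simp_all [mem_closedNbr]
  rw [Set.ncard_eq_toFinset_card']
  simpa using mul_card_image_le_card_of_maps_to (t := univ) (fun _ _ => mem_univ _) 2
    (fun a _ => hfibre a)

end TwoCorona

theorem stmt_7 {A : Type*} [Fintype A] (H : SimpleGraph A)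
    (hconn : H.Connected) (hA : 2 ≤ Fintype.card A) :
    TwinFree (twoCorona H) ∧
    ∃ k : ℕ, IsLeast {m : ℕ | ∃ C : Set (A × Fin 3), IsIdCode (twoCorona H) C ∧ C.ncard = m} k ∧
      3 * k = 2 * Fintype.card (A × Fin 3) := by
  have : Nontrivial A := Fintype.one_lt_card_iff_nontrivial.1 hA
  have hH : ∀ a, ∃ b, H.Adj a b := hconn.preconnected.exists_adj_of_nontrivial
  refine ⟨twoCorona_twinFree hH, 2 * Fintype.card A, ⟨?_, ?_⟩, ?_⟩
  · exact ⟨_, isIdCode_twoCorona_snd_ne_two hH, ncard_setOf_snd_ne_two⟩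
  · rintro _ ⟨C, hC, rfl⟩
    exact hC.two_mul_card_le_ncard_twoCorona
  · simp only [Fintype.card_prod, Fintype.card_fin]
    ring
end

section
/- The minimum size of an identifying code of the path P_n on n ≥ 4 vertices equals ⌈(n+1)/2⌉. -/
open SimpleGraph

/-!
An identifying code must dominate every vertex and separate each pair of adjacent vertices
`u, u + 1` of `P_n`, i.e. contain `u - 1` or `u + 2`. So `d ↦ d + 3` maps the non-code vertices
`d ≤ n - 4` injectively into code vertices `≥ 3`; among the last three vertices at most one is
outside the code (`n - 3` separates `n - 2` from `n - 1`, and `n - 1` is dominated), while the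
first three contain two code vertices (`2` and a dominator of `0`). Hence there are fewer
non-code than code vertices. Conversely, the even vertices together with `n - 3` form an
identifying code of the right size.
-/

open Finset

theorem isIdCode_iff {V : Type*} (G : SimpleGraph V) (C : Set V) :
    IsIdCode G C ↔ (∀ v, (closedNbr G v ∩ C).Nonempty) ∧
      ∀ u v, u ≠ v → ∃ w ∈ C, w ∈ symmDiff (closedNbr G u) (closedNbr G v) := by
  refine and_congr_right fun _ => forall₂_congr fun u v => ?_
  rw [← not_imp_not, Set.ext_iff]
  refine imp_congr_right fun _ => ?_
  simp only [Set.mem_inter_iff, Set.mem_symmDiff]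
  grind

theorem mem_closedNbr_pathGraph {n : ℕ} (v w : Fin n) :
    w ∈ closedNbr (pathGraph n) v ↔ (w : ℕ) ≤ v + 1 ∧ (v : ℕ) ≤ w + 1 := by
  simp only [closedNbr, Set.mem_insert_iff, mem_neighborSet, pathGraph_adj, Fin.ext_iff]
  omega

theorem add_one_le_two_mul_card_of_dominating_separating {n : ℕ} (hn : 3 ≤ n) {S : Finset ℕ}
    (hS : ∀ k ∈ S, k < n)
    (hdom : ∀ v < n, ∃ k ∈ S, k ≤ v + 1 ∧ v ≤ k + 1)
    (hsep : ∀ u, u + 1 < n → ∃ k ∈ S, k + 1 = u ∨ k = u + 2) :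
    n + 1 ≤ 2 * #S := by
  have two_mem : 2 ∈ S := by
    obtain ⟨k, hk, hk2⟩ := hsep 0 (by omega)
    obtain rfl : k = 2 := by omega
    exact hk
  obtain ⟨a, ha, ha1⟩ : ∃ a ∈ S, a ≤ 1 := by
    obtain ⟨k, hk, hk1⟩ := hdom 0 (by omega)
    exact ⟨k, hk, by omega⟩
  have shift_mem : ∀ d ∉ S, d + 3 < n → d + 3 ∈ S := by
    intro d hd hdn
    obtain ⟨k, hk, hkd | rfl⟩ := hsep (d + 1) (by omega)
    · obtain rfl : k = d := by omega
      exact absurd hk hd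
    · exact hk
  have tail_subsingleton : ∀ d ∉ S, ∀ d' ∉ S, d < n → d' < n → n ≤ d + 3 → n ≤ d' + 3 →
      d = d' := by
    obtain ⟨k, hk, hkn⟩ := hsep (n - 2) (by omega)
    obtain ⟨l, hl, hln⟩ := hdom (n - 1) (by omega)
    have := hS k hk
    have := hS l hl
    intro d hd d' hd' _ _ _ _
    have := ne_of_mem_of_not_mem hk hd
    have := ne_of_mem_of_not_mem hk hd'
    have := ne_of_mem_of_not_mem hl hd
    have := ne_of_mem_of_not_mem hl hd'
    omega
  have hcard : #(range n \ S) ≤ #(S.erase a) := by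
    refine card_le_card_of_injOn (fun d => if d + 3 < n then d + 3 else 2) ?_ ?_
    · intro d hd
      simp only [mem_coe, mem_sdiff, mem_range] at hd
      simp only [mem_coe, mem_erase]
      split_ifs with hdn
      · exact ⟨by omega, shift_mem d hd.2 hdn⟩
      · exact ⟨by omega, two_mem⟩
    · intro d hd d' hd' h
      simp only [mem_coe, mem_sdiff, mem_range] at hd hd'
      dsimp only at h
      split_ifs at h with hdn hdn' hdn' <;> try omega
      exact tail_subsingleton d hd.2 d' hd'.2 hd.1 hd'.1 (by omega) (by omega)
  rw [card_sdiff_of_subset (fun k hk => mem_range.2 (hS k hk)), card_range,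
    card_erase_of_mem ha] at hcard
  have := card_pos.2 ⟨a, ha⟩
  omega

theorem IsIdCode.add_one_le_two_mul_ncard_of_pathGraph {n : ℕ} (hn : 3 ≤ n) {C : Set (Fin n)}
    (hC : IsIdCode (pathGraph n) C) : n + 1 ≤ 2 * C.ncard := by
  classical
  obtain ⟨hdom, hsep⟩ := (isIdCode_iff _ _).1 hC
  have val_mem : ∀ w : Fin n, (w : ℕ) ∈ C.toFinset.map Fin.valEmbedding ↔ w ∈ C :=
    fun w => (mem_map' _).trans Set.mem_toFinset
  rw [Set.ncard_eq_toFinset_card', ← card_map Fin.valEmbedding]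
  refine add_one_le_two_mul_card_of_dominating_separating hn ?_ ?_ ?_
  · intro k hk
    obtain ⟨w, -, rfl⟩ := mem_map.1 hk
    exact w.isLt
  · intro v hv
    obtain ⟨w, hwN, hwC⟩ := hdom ⟨v, hv⟩
    exact ⟨w, (val_mem w).2 hwC, (mem_closedNbr_pathGraph _ _).1 hwN⟩
  · intro u hu
    obtain ⟨w, hwC, hw⟩ := hsep ⟨u, by omega⟩ ⟨u + 1, hu⟩ (by simp [Fin.ext_iff])
    simp only [Set.mem_symmDiff, mem_closedNbr_pathGraph] at hw
    exact ⟨w, (val_mem w).2 hwC, by omega⟩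

def pathCode (n : ℕ) : Set (Fin n) := {v | Even (v : ℕ) ∨ (v : ℕ) = n - 3}

theorem isIdCode_pathCode {n : ℕ} (hn : 3 ≤ n) : IsIdCode (pathGraph n) (pathCode n) := by
  refine (isIdCode_iff _ _).2 ⟨fun v => ?_, fun u v huv => ?_⟩
  · refine ⟨⟨v - v % 2, by omega⟩, ?_, Or.inl (Nat.even_iff.2 (by simp; omega))⟩
    rw [mem_closedNbr_pathGraph]
    simp only
    omega
  wlog huv' : u < v generalizing u v
  · obtain ⟨w, hwC, hw⟩ := this v u huv.symm (by omega)
    exact ⟨w, hwC, symmDiff_comm (α := Set (Fin n)) _ _ ▸ hw⟩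
  obtain ⟨w, hwn, hwC, hw⟩ : ∃ w < n, (w % 2 = 0 ∨ w = n - 3) ∧
      ((w ≤ u + 1 ∧ (u : ℕ) ≤ w + 1) ↔ ¬(w ≤ v + 1 ∧ (v : ℕ) ≤ w + 1)) := by
    rcases Nat.mod_two_eq_zero_or_one u with hu | hu
    · by_cases hvu : (v : ℕ) = u + 1
      · by_cases hun : (u : ℕ) + 2 < n
        · exact ⟨u + 2, hun, by omega, by omega⟩
        · exact ⟨n - 3, by omega, by omega, by omega⟩
      · exact ⟨u, by omega, by omega, by omega⟩
    · exact ⟨u - 1, by omega, by omega, by omega⟩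
  refine ⟨⟨w, hwn⟩, by simpa [pathCode, Nat.even_iff] using hwC, ?_⟩
  simp only [Set.mem_symmDiff, mem_closedNbr_pathGraph]
  tauto

theorem card_filter_even_range (n : ℕ) : #{k ∈ range n | Even k} = (n + 1) / 2 := by
  induction n with
  | zero => rfl
  | succ n ih =>
    rw [range_add_one, filter_insert]
    split_ifs with h
    · rw [card_insert_of_notMem (by simp), ih]
      grind
    · rw [ih]
      grind

theorem ncard_pathCode {n : ℕ} (hn : 3 ≤ n) : (pathCode n).ncard = (n + 2) / 2 := by
  have hval : Fin.val '' pathCode n = ↑({k ∈ range n | Even k ∨ k = n - 3}) := by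
    ext k
    simp only [pathCode, Set.mem_image, coe_filter, mem_range]
    exact ⟨fun ⟨w, hw, hwk⟩ => hwk ▸ ⟨w.isLt, hw⟩, fun ⟨hk, hk'⟩ => ⟨⟨k, hk⟩, hk', rfl⟩⟩
  rw [← Set.ncard_image_of_injective _ Fin.val_injective, hval, Set.ncard_coe_finset]
  by_cases hn2 : n % 2 = 0
  · have : {k ∈ range n | Even k ∨ k = n - 3} = insert (n - 3) {k ∈ range n | Even k} := by
      ext k
      simp only [mem_filter, mem_range, mem_insert, Nat.even_iff]
      omega
    rw [this, card_insert_of_notMem (by simp [Nat.even_iff]; omega), card_filter_even_range]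
    omega
  · rw [filter_congr fun k hk => (by simp only [mem_range, Nat.even_iff] at hk ⊢; omega :
      Even k ∨ k = n - 3 ↔ Even k), card_filter_even_range]
    omega

theorem stmt_11 (n : ℕ) (hn : 4 ≤ n) :
    IsLeast {m : ℕ | ∃ C : Set (Fin n), IsIdCode (pathGraph n) C ∧ C.ncard = m}
      ((n + 2) / 2) := by
  refine ⟨⟨pathCode n, isIdCode_pathCode (by omega), ncard_pathCode (by omega)⟩, ?_⟩
  rintro m ⟨C, hC, rfl⟩
  have := hC.add_one_le_two_mul_ncard_of_pathGraph (by omega)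
  omega
end

section
/- For the 1-corona K_m∘₁ of the complete graph K_m with m ≥ 3 (each clique vertex given one pendant leaf, order 2m), the minimum size of a total dominating identifying code equals 2m − 1. -/
open SimpleGraph

/-- The 1-corona of the complete graph K_m: clique vertices (i,0), pendant leaves (i,1). -/
def coronaComplete (m : ℕ) : SimpleGraph (Fin m × Fin 2) :=
  SimpleGraph.fromRel (fun p q =>
    (p.2 = 0 ∧ q.2 = 0 ∧ p.1 ≠ q.1) ∨ (p.1 = q.1 ∧ p.2 = 0 ∧ q.2 = 1))
/-! Every clique vertex `(i, 0)` is the only neighbour of its leaf `(i, 1)`, so it lies in every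
total dominating set. If two leaves `(i, 1)` and `(j, 1)` were both missing from a code `C`, then
`(i, 0)` and `(j, 0)` would both have trace `C ∩ K_m`; hence a code misses at most one vertex.
Conversely, all vertices but one leaf form a code: when `m ≥ 3`, a clique vertex and a leaf are
separated by a third clique vertex. -/

lemma mem_closedNbr_iff_of_inter_eq {V : Type*} {G : SimpleGraph V} {C : Set V} {u v w : V}
    (h : closedNbr G u ∩ C = closedNbr G v ∩ C) (hw : w ∈ C) :
    w ∈ closedNbr G u ↔ w ∈ closedNbr G v := by
  simpa only [Set.mem_inter_iff, hw, and_true] using Set.ext_iff.mp h w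

lemma IsTotalIdCode.mem_of_neighborSet_eq_singleton {V : Type*} {G : SimpleGraph V} {C : Set V}
    (hC : IsTotalIdCode G C) {u v : V} (h : G.neighborSet v = {u}) : u ∈ C := by
  obtain ⟨w, hw, hwC⟩ := hC.1 v
  rwa [h, Set.mem_singleton_iff.mp hw] at *

namespace coronaComplete

variable {m : ℕ}

lemma adj_iff (p q : Fin m × Fin 2) : (coronaComplete m).Adj p q ↔
    (p.2 = 0 ∧ q.2 = 0 ∧ p.1 ≠ q.1) ∨ (p.1 = q.1 ∧ p.2 ≠ q.2) := by
  simp only [coronaComplete, fromRel_adj]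
  grind

lemma neighborSet_leaf (i : Fin m) : (coronaComplete m).neighborSet (i, 1) = {(i, 0)} := by
  ext q
  simp only [mem_neighborSet, adj_iff, Set.mem_singleton_iff]
  grind

lemma mem_closedNbr_leaf (i : Fin m) (q : Fin m × Fin 2) :
    q ∈ closedNbr (coronaComplete m) (i, 1) ↔ q.1 = i := by
  obtain ⟨j, b⟩ := q
  fin_cases b <;> simp [closedNbr, neighborSet_leaf]

lemma mem_closedNbr_clique (i : Fin m) (q : Fin m × Fin 2) :
    q ∈ closedNbr (coronaComplete m) (i, 0) ↔ q.2 = 0 ∨ q.1 = i := by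
  simp only [closedNbr, Set.mem_insert_iff, mem_neighborSet, adj_iff]
  grind

theorem isTotalIdCode_compl_leaf (hm : 3 ≤ m) (i₀ : Fin m) :
    IsTotalIdCode (coronaComplete m) {(i₀, 1)}ᶜ := by
  have hm' : 3 ≤ ENat.card (Fin m) := by simpa using hm
  constructor
  · rintro ⟨i, a⟩
    fin_cases a
    · obtain ⟨j, hji, -⟩ := ENat.exists_ne_ne_of_three_le hm' i i
      exact ⟨(j, 0), by simp [adj_iff, hji.symm]⟩
    · exact ⟨(i, 0), by simp [neighborSet_leaf]⟩
  · rintro ⟨i, a⟩ ⟨j, b⟩ H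
    have sep : ∀ w ∉ ({(i₀, 1)} : Set (Fin m × Fin 2)), _ := fun w hw =>
      mem_closedNbr_iff_of_inter_eq H hw
    fin_cases a <;> fin_cases b
    · by_contra hij
      replace hij : i ≠ j := by simpa using hij
      by_cases hi : i = i₀
      · subst hi
        simpa [mem_closedNbr_clique, hij.symm] using sep (j, 1) (by simpa using hij.symm)
      · simpa [mem_closedNbr_clique, hij] using sep (i, 1) (by simpa using hi)
    · obtain ⟨k, hki, hkj⟩ := ENat.exists_ne_ne_of_three_le hm' i j
      simpa [mem_closedNbr_clique, mem_closedNbr_leaf, hkj] using sep (k, 0) (by simp)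
    · obtain ⟨k, hki, hkj⟩ := ENat.exists_ne_ne_of_three_le hm' i j
      simpa [mem_closedNbr_clique, mem_closedNbr_leaf, hki] using sep (k, 0) (by simp)
    · simpa [mem_closedNbr_leaf] using sep (i, 0) (by simp)

theorem compl_subsingleton_of_isTotalIdCode {C : Set (Fin m × Fin 2)}
    (hC : IsTotalIdCode (coronaComplete m) C) : Cᶜ.Subsingleton := by
  have hclique (i : Fin m) : (i, 0) ∈ C := hC.mem_of_neighborSet_eq_singleton (neighborSet_leaf i)
  rintro ⟨i, a⟩ hi ⟨j, b⟩ hj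
  fin_cases a
  · exact absurd (hclique i) hi
  fin_cases b
  · exact absurd (hclique j) hj
  have htrace : closedNbr (coronaComplete m) (i, 0) ∩ C =
      closedNbr (coronaComplete m) (j, 0) ∩ C := by
    ext ⟨k, c⟩
    fin_cases c
    · simp [mem_closedNbr_clique]
    · simp only [Set.mem_inter_iff, mem_closedNbr_clique]
      constructor <;> rintro ⟨h | rfl, hk⟩ <;> simp_all
  simp [(Prod.mk.inj (hC.2 _ _ htrace)).1]

end coronaComplete

theorem stmt_13 (m : ℕ) (hm : 3 ≤ m) :
    IsLeast {n : ℕ | ∃ C : Set (Fin m × Fin 2),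
        IsTotalIdCode (coronaComplete m) C ∧ C.ncard = n} (2 * m - 1) := by
  have hcard : Nat.card (Fin m × Fin 2) = 2 * m := by simp [mul_comm]
  constructor
  · refine ⟨_, coronaComplete.isTotalIdCode_compl_leaf hm ⟨0, by omega⟩, ?_⟩
    rw [Set.ncard_compl, Set.ncard_singleton, hcard]
  · rintro n ⟨C, hC, rfl⟩
    have hcompl : Cᶜ.ncard ≤ 1 := Set.ncard_le_one_iff_subsingleton.mpr
      (coronaComplete.compl_subsingleton_of_isTotalIdCode hC)
    have hsum := Set.ncard_add_ncard_compl C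
    omega
end

section
/- For the 1-corona K_m∘₁ of the complete graph K_m with m ≥ 3, the minimum size of an identifying code equals m + 1. -/
open SimpleGraph

/-! The closed neighbourhood of a leaf `(i, 1)` is its fibre `{(i, 0), (i, 1)}`, and that of a
clique vertex `(i, 0)` is the clique together with this fibre. Hence an identifying code `C` meets
every fibre, contains for every `s` a clique vertex `(t, 0)` with `t ≠ s` (to separate `(s, 0)`
from `(s, 1)`), and contains `(i, 1)` or `(j, 1)` for any two clique vertices `(i, 0) ≠ (j, 0)`.
The second condition puts two clique vertices into `C` and the third then a whole fibre, so
`Prod.fst` maps `C` onto `Fin m` non-injectively and `|C| ≥ m + 1`. Conversely these conditions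
suffice, and for `z ≠ o` the leaves `(i, 1)` with `i ≠ z` together with `(z, 0)` and `(o, 0)`
satisfy them. -/

theorem Set.ncard_image_lt_of_not_injOn {α β : Type*} {s : Set α} {f : α → β}
    (hs : s.Finite) (hf : ¬ Set.InjOn f s) : (f '' s).ncard < s.ncard :=
  (Set.ncard_image_le hs).lt_of_ne fun h => hf (Set.injOn_of_ncard_image_eq h hs)

section CoronaComplete

variable {m : ℕ} {C : Set (Fin m × Fin 2)}

lemma closedNbr_coronaComplete_leaf (i : Fin m) :
    closedNbr (coronaComplete m) (i, 1) = {q | q.1 = i} := by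
  ext ⟨j, b⟩
  fin_cases b <;> simp [closedNbr, coronaComplete, Prod.ext_iff, eq_comm]

lemma closedNbr_coronaComplete_clique (i : Fin m) :
    closedNbr (coronaComplete m) (i, 0) =
      {q | q.2 = 0} ∪ closedNbr (coronaComplete m) (i, 1) := by
  rw [closedNbr_coronaComplete_leaf]
  ext ⟨j, b⟩
  fin_cases b <;> simp [closedNbr, coronaComplete, Prod.ext_iff, eq_comm, em]

lemma mem_closedNbr_coronaComplete_leaf {i : Fin m} {q : Fin m × Fin 2} :
    q ∈ closedNbr (coronaComplete m) (i, 1) ↔ q.1 = i := by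
  rw [closedNbr_coronaComplete_leaf]; rfl

lemma mem_closedNbr_coronaComplete_clique {i : Fin m} {q : Fin m × Fin 2} :
    q ∈ closedNbr (coronaComplete m) (i, 0) ↔ q.2 = 0 ∨ q.1 = i := by
  rw [closedNbr_coronaComplete_clique, closedNbr_coronaComplete_leaf]; rfl

lemma closedNbr_coronaComplete_clique_inter (i : Fin m) :
    closedNbr (coronaComplete m) (i, 0) ∩ C =
      {q | q.2 = 0} ∩ C ∪ closedNbr (coronaComplete m) (i, 1) ∩ C := by
  rw [closedNbr_coronaComplete_clique, Set.union_inter_distrib_right]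

lemma fin_two_eq_zero_or_eq_one (b : Fin 2) : b = 0 ∨ b = 1 := by omega

namespace IsIdCode

lemma exists_mem_fiber_coronaComplete (hC : IsIdCode (coronaComplete m) C) (i : Fin m) :
    ∃ b, (i, b) ∈ C := by
  obtain ⟨⟨j, b⟩, hj, hb⟩ := hC.1 (i, 1)
  exact ⟨b, mem_closedNbr_coronaComplete_leaf.1 hj ▸ hb⟩

lemma exists_clique_mem_ne_coronaComplete (hC : IsIdCode (coronaComplete m) C) (s : Fin m) :
    ∃ t ≠ s, (t, 0) ∈ C := by
  by_contra! hs
  have hsub : {q | q.2 = 0} ∩ C ⊆ closedNbr (coronaComplete m) (s, 1) ∩ C := by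
    rintro ⟨t, b⟩ ⟨rfl, hmem⟩
    exact ⟨mem_closedNbr_coronaComplete_leaf.2 (by_contra fun hts => hs t hts hmem), hmem⟩
  have := hC.2 (s, 0) (s, 1) <| by
    rw [closedNbr_coronaComplete_clique_inter, Set.union_eq_self_of_subset_left hsub]
  simp at this

lemma leaf_mem_or_leaf_mem_coronaComplete (hC : IsIdCode (coronaComplete m) C) {i j : Fin m}
    (hij : i ≠ j) : (i, 1) ∈ C ∨ (j, 1) ∈ C := by
  by_contra! h
  have hsub (k : Fin m) (hk : (k, 1) ∉ C) :
      closedNbr (coronaComplete m) (k, 1) ∩ C ⊆ {q | q.2 = 0} ∩ C := by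
    rintro ⟨t, b⟩ ⟨ht, hmem⟩
    obtain rfl : t = k := mem_closedNbr_coronaComplete_leaf.1 ht
    rcases fin_two_eq_zero_or_eq_one b with rfl | rfl
    · exact ⟨rfl, hmem⟩
    · exact absurd hmem hk
  have := hC.2 (i, 0) (j, 0) <| by
    rw [closedNbr_coronaComplete_clique_inter, closedNbr_coronaComplete_clique_inter,
      Set.union_eq_self_of_subset_right (hsub i h.1),
      Set.union_eq_self_of_subset_right (hsub j h.2)]
  exact hij (Prod.ext_iff.1 this).1

theorem add_one_le_ncard_coronaComplete (hC : IsIdCode (coronaComplete m) C) (hm : 0 < m) :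
    m + 1 ≤ C.ncard := by
  obtain ⟨t, -, ht⟩ := hC.exists_clique_mem_ne_coronaComplete ⟨0, hm⟩
  obtain ⟨t', htt', ht'⟩ := hC.exists_clique_mem_ne_coronaComplete t
  obtain ⟨u, hu0, hu1⟩ : ∃ u, (u, 0) ∈ C ∧ (u, 1) ∈ C :=
    (hC.leaf_mem_or_leaf_mem_coronaComplete htt'.symm).elim (⟨t, ht, ·⟩) (⟨t', ht', ·⟩)
  have himage : Prod.fst '' C = Set.univ := Set.eq_univ_of_forall fun i =>
    let ⟨_, hb⟩ := hC.exists_mem_fiber_coronaComplete i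
    ⟨_, hb, rfl⟩
  have hnotinj : ¬ Set.InjOn Prod.fst C := fun hinj => by simpa using hinj hu0 hu1 rfl
  calc m + 1 = (Prod.fst '' C).ncard + 1 := by simp [himage]
    _ ≤ C.ncard := Set.ncard_image_lt_of_not_injOn C.toFinite hnotinj

end IsIdCode

theorem isIdCode_coronaComplete_of (hfiber : ∀ i, ∃ b, (i, b) ∈ C)
    (hclique : ∀ s, ∃ t ≠ s, (t, 0) ∈ C)
    (hleaf : ∀ i j, i ≠ j → (i, 1) ∈ C ∨ (j, 1) ∈ C) :
    IsIdCode (coronaComplete m) C := by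
  have separated {u v : Fin m × Fin 2} (x : Fin m × Fin 2) (hx : x ∈ C)
      (hu : x ∈ closedNbr (coronaComplete m) u) (hv : x ∉ closedNbr (coronaComplete m) v) :
      closedNbr (coronaComplete m) u ∩ C ≠ closedNbr (coronaComplete m) v ∩ C :=
    fun huv => hv (huv ▸ ⟨hu, hx⟩ : x ∈ _ ∩ C).1
  refine ⟨fun ⟨i, b⟩ => ?_, fun ⟨i, b⟩ ⟨j, c⟩ h => ?_⟩
  · obtain ⟨b', hb'⟩ := hfiber i
    have hleaf : (i, b') ∈ closedNbr (coronaComplete m) (i, 1) ∩ C :=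
      ⟨mem_closedNbr_coronaComplete_leaf.2 rfl, hb'⟩
    rcases fin_two_eq_zero_or_eq_one b with rfl | rfl
    · exact ⟨_, by rw [closedNbr_coronaComplete_clique_inter]; exact Or.inr hleaf⟩
    · exact ⟨_, hleaf⟩
  rcases fin_two_eq_zero_or_eq_one b with rfl | rfl <;>
    rcases fin_two_eq_zero_or_eq_one c with rfl | rfl
  · by_contra hne
    have hij : i ≠ j := fun hij => hne (hij ▸ rfl)
    rcases hleaf i j hij with hi | hj
    · exact separated _ hi (mem_closedNbr_coronaComplete_clique.2 (Or.inr rfl))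
        (by simp [mem_closedNbr_coronaComplete_clique, hij]) h
    · exact separated _ hj (mem_closedNbr_coronaComplete_clique.2 (Or.inr rfl))
        (by simp [mem_closedNbr_coronaComplete_clique, hij.symm]) h.symm
  · obtain ⟨t, hti, ht⟩ := hclique j
    exact absurd h (separated _ ht (mem_closedNbr_coronaComplete_clique.2 (Or.inl rfl))
      (by simpa [mem_closedNbr_coronaComplete_leaf]))
  · obtain ⟨t, hti, ht⟩ := hclique i
    exact absurd h.symm (separated _ ht (mem_closedNbr_coronaComplete_clique.2 (Or.inl rfl))
      (by simpa [mem_closedNbr_coronaComplete_leaf]))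
  · obtain ⟨b', hb'⟩ := hfiber i
    have := (h ▸ ⟨mem_closedNbr_coronaComplete_leaf.2 rfl, hb'⟩ :
      (i, b') ∈ closedNbr (coronaComplete m) (j, 1) ∩ C)
    rw [show i = j from mem_closedNbr_coronaComplete_leaf.1 this.1]

def coronaCompleteCode (z o : Fin m) : Set (Fin m × Fin 2) :=
  insert (z, 0) (insert (o, 0) ((·, 1) '' {z}ᶜ))

variable {z o : Fin m}

theorem isIdCode_coronaCompleteCode (hzo : z ≠ o) :
    IsIdCode (coronaComplete m) (coronaCompleteCode z o) := by
  refine isIdCode_coronaComplete_of (fun i => ?_) (fun s => ?_) (fun i j hij => ?_)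
  · by_cases hi : i = z
    · exact ⟨0, by simp [coronaCompleteCode, hi]⟩
    · exact ⟨1, by simp [coronaCompleteCode, hi]⟩
  · by_cases hs : s = z
    · exact ⟨o, hs ▸ hzo.symm, by simp [coronaCompleteCode]⟩
    · exact ⟨z, Ne.symm hs, by simp [coronaCompleteCode]⟩
  · by_cases hi : i = z
    · exact Or.inr (by simp [coronaCompleteCode, ← hi, hij.symm])
    · exact Or.inl (by simp [coronaCompleteCode, hi])

theorem ncard_coronaCompleteCode (hzo : z ≠ o) : (coronaCompleteCode z o).ncard = m + 1 := by
  have hm : 0 < m := z.pos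
  rw [coronaCompleteCode, Set.ncard_insert_of_notMem (by simp [hzo]),
    Set.ncard_insert_of_notMem (by simp),
    Set.ncard_image_of_injective _ fun a b hab => (Prod.ext_iff.1 hab).1,
    Set.ncard_compl, Set.ncard_singleton, Nat.card_eq_fintype_card, Fintype.card_fin]
  omega

end CoronaComplete

theorem stmt_14 (m : ℕ) (hm : 3 ≤ m) :
    IsLeast {n : ℕ | ∃ C : Set (Fin m × Fin 2),
        IsIdCode (coronaComplete m) C ∧ C.ncard = n} (m + 1) := by
  have hzo : (⟨0, by omega⟩ : Fin m) ≠ ⟨1, by omega⟩ := by simp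
  refine ⟨⟨_, isIdCode_coronaCompleteCode hzo, ncard_coronaCompleteCode hzo⟩, ?_⟩
  rintro n ⟨C, hC, rfl⟩
  exact hC.add_one_le_ncard_coronaComplete (by omega)
end

section
/- Let G be a connected graph with at least one cycle and at least one leaf, such that removing a cut-edge uv separates a tree component T_u containing u. If additionally G has girth at least 5 and C_u is an identifying code of G − T_u containing v, then C_u ∪ {u'} is an identifying code of G in the case where T_u is a path on two vertices u, u' with u' a leaf. -/
open SimpleGraph

/-! A vertex outside `{u, u'}` is not adjacent to the leaf `u'`, so it sees the same code
vertices in `G` as in `G - {u, u'}`. The new code vertex `u'` is seen exactly by `u` and `u'`,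
and these two are told apart by `v`, which differs from `u'` because `G` is identifiable. -/

section

variable {V : Type*} {G : SimpleGraph V}

lemma closedNbr_inter_image_val (S : Set V) (w : S) (C : Set S) :
    closedNbr G w ∩ Subtype.val '' C = Subtype.val '' (closedNbr (G.induce S) w ∩ C) := by
  ext y
  simp only [closedNbr, Set.mem_inter_iff, Set.mem_insert_iff, mem_neighborSet, Set.mem_image,
    comap_adj, Function.Embedding.coe_subtype]
  constructor
  · rintro ⟨hy, z, hz, rfl⟩
    exact ⟨z, ⟨hy.imp Subtype.ext id, hz⟩, rfl⟩
  · rintro ⟨z, ⟨hz, hzC⟩, rfl⟩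
    exact ⟨hz.imp (congrArg _) id, z, hzC, rfl⟩

lemma mem_closedNbr_iff_of_neighborSet_eq_singleton {x y w : V} (hx : G.neighborSet x = {y}) :
    x ∈ closedNbr G w ↔ w = x ∨ w = y := by
  rw [closedNbr, Set.mem_insert_iff, mem_neighborSet, G.adj_comm, ← mem_neighborSet, hx,
    Set.mem_singleton_iff, eq_comm]

lemma closedNbr_eq_of_neighborSet_eq {x : V} {s : Set V} (hx : G.neighborSet x = s) :
    closedNbr G x = insert x s := by
  rw [closedNbr, hx]

-- Otherwise `u` and `u'` would be closed twins.
lemma Identifiable.ne_of_neighborSet_eq_pair (hid : Identifiable G) {u u' v : V}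
    (hleaf : G.neighborSet u' = {u}) (hu : G.neighborSet u = {u', v}) : v ≠ u' := by
  rintro rfl
  have hadj : G.Adj u v := by rw [← mem_neighborSet, hu]; exact Set.mem_insert _ _
  refine hadj.ne (hid u v ?_)
  rw [closedNbr_eq_of_neighborSet_eq hu, closedNbr_eq_of_neighborSet_eq hleaf,
    Set.pair_eq_singleton, Set.pair_comm]

section PendantPath

variable {u u' : V} {Cu : Set ({u, u'}ᶜ : Set V)}

lemma leaf_mem_closedNbr_inter_iff (hleaf : G.neighborSet u' = {u}) (w : V) :
    u' ∈ closedNbr G w ∩ (Subtype.val '' Cu ∪ {u'}) ↔ w ∈ ({u, u'} : Set V) := by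
  rw [Set.mem_inter_iff, mem_closedNbr_iff_of_neighborSet_eq_singleton hleaf, Set.mem_insert_iff,
    Set.mem_singleton_iff, or_comm]
  exact and_iff_left (Or.inr rfl)

lemma closedNbr_leaf_inter (hleaf : G.neighborSet u' = {u}) :
    closedNbr G u' ∩ (Subtype.val '' Cu ∪ {u'}) = {u'} := by
  refine Set.eq_singleton_iff_unique_mem.2 ⟨(leaf_mem_closedNbr_inter_iff hleaf u').2 (by simp), ?_⟩
  rintro y ⟨hy, ⟨z, -, rfl⟩ | rfl⟩
  · rw [closedNbr_eq_of_neighborSet_eq hleaf] at hy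
    exact absurd (by simpa [or_comm] using hy) z.2
  · rfl

lemma closedNbr_inter_eq_image_of_mem_compl (hleaf : G.neighborSet u' = {u})
    (w : ({u, u'}ᶜ : Set V)) :
    closedNbr G w ∩ (Subtype.val '' Cu ∪ {u'}) =
      Subtype.val '' (closedNbr (G.induce {u, u'}ᶜ) w ∩ Cu) := by
  have hleaf_notMem : u' ∉ closedNbr G w ∩ (Subtype.val '' Cu ∪ {u'}) :=
    (leaf_mem_closedNbr_inter_iff hleaf w).not.2 w.2
  rw [Set.inter_union_distrib_left, closedNbr_inter_image_val, Set.union_eq_left,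
    Set.inter_singleton_eq_empty.2 fun h => hleaf_notMem ⟨h, Or.inr rfl⟩]
  exact Set.empty_subset _

end PendantPath

end

theorem stmt_16_general {V : Type*} (G : SimpleGraph V)
    (hid : Identifiable G)
    (u u' v : V) (hleafu' : G.neighborSet u' = {u})
    (hu : G.neighborSet u = {u', v})
    (Cu : Set ({u, u'}ᶜ : Set V))
    (hCu : IsIdCode (G.induce ({u, u'}ᶜ : Set V)) Cu)
    (hvmem : ∀ hv : v ∈ ({u, u'}ᶜ : Set V), (⟨v, hv⟩ : ({u, u'}ᶜ : Set V)) ∈ Cu) :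
    IsIdCode G ((Subtype.val '' Cu) ∪ {u'}) := by
  set C := Subtype.val '' Cu ∪ {u'}
  have hvu' : v ≠ u' := hid.ne_of_neighborSet_eq_pair hleafu' hu
  have hvu : v ≠ u := (G.ne_of_adj (show G.Adj u v by rw [← mem_neighborSet, hu]; simp)).symm
  have hv_trace_u : v ∈ closedNbr G u ∩ C :=
    ⟨by simp [closedNbr_eq_of_neighborSet_eq hu], Or.inl ⟨⟨v, by simp [hvu, hvu']⟩, hvmem _, rfl⟩⟩
  have htrace := closedNbr_inter_eq_image_of_mem_compl (Cu := Cu) hleafu'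
  have hleaf_mem := leaf_mem_closedNbr_inter_iff (Cu := Cu) hleafu'
  refine ⟨fun w => ?_, fun a b hab => ?_⟩
  · by_cases hw : w ∈ ({u, u'} : Set V)
    · exact ⟨u', (hleaf_mem w).2 hw⟩
    · exact htrace ⟨w, hw⟩ ▸ (hCu.1 _).image _
  have hab_mem : a ∈ ({u, u'} : Set V) ↔ b ∈ ({u, u'} : Set V) :=
    (hleaf_mem a).symm.trans (hab ▸ hleaf_mem b)
  by_cases ha : a ∈ ({u, u'} : Set V)
  · have hb := hab_mem.1 ha
    have htrace_ne : closedNbr G u ∩ C ≠ closedNbr G u' ∩ C := fun h =>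
      hvu' (by rwa [h, closedNbr_leaf_inter hleafu'] at hv_trace_u)
    simp only [Set.mem_insert_iff, Set.mem_singleton_iff] at ha hb
    rcases ha with rfl | rfl <;> rcases hb with rfl | rfl
    · rfl
    · exact absurd hab htrace_ne
    · exact absurd hab.symm htrace_ne
    · rfl
  · rw [htrace ⟨a, ha⟩, htrace ⟨b, hab_mem.not.1 ha⟩] at hab
    exact congrArg Subtype.val (hCu.2 _ _ (Set.image_injective.2 Subtype.val_injective hab))

theorem stmt_16 {V : Type*} [Fintype V] (G : SimpleGraph V)
    (hconn : G.Connected) (hid : Identifiable G) (hgirth : 5 ≤ G.egirth)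
    (hcyc : ¬ G.IsAcyclic)
    (u u' v : V) (hleafu' : G.neighborSet u' = {u})
    (hu : G.neighborSet u = {u', v})
    (Cu : Set ({u, u'}ᶜ : Set V))
    (hCu : IsIdCode (G.induce ({u, u'}ᶜ : Set V)) Cu)
    (hvmem : ∀ hv : v ∈ ({u, u'}ᶜ : Set V), (⟨v, hv⟩ : ({u, u'}ᶜ : Set V)) ∈ Cu) :
    IsIdCode G ((Subtype.val '' Cu) ∪ {u'}) :=
  stmt_16_general G hid u u' v hleafu' hu Cu hCu hvmem
end
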